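/- arXiv:1512.02983 — 11 statements merged into one kernel-verified Lean document; each statement's English description precedes it below -/
import Mathlib

section
/- Let Y be an n×n matrix (over a commutative ring, or with real entries) such that Y^k = 0 for some positive integer k, and define Z = I + Σ_{j=1}^{k-1} binom(1/2, j) Y^j (generalized binomial coefficients). Then Z^2 = I + Y. -/
/-! Truncating a power series at `X ^ k` and evaluating at an element `a` with `a ^ k = 0` is
multiplicative, because everything the truncation discards is killed by `a ^ k`. Hence the
power series identity `(1 + X) ^ (1/2) * (1 + X) ^ (1/2) = 1 + X`, i.e. Chu–Vandermonde for the
binomial series, survives evaluation at a nilpotent matrix. -/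

/-- The generalized binomial coefficient `(1/2 choose j)`. -/
noncomputable def halfChoose (j : ℕ) : ℝ :=
  (∏ i ∈ Finset.range j, ((1 : ℝ) / 2 - i)) / (Nat.factorial j)

theorem halfChoose_eq_choose (j : ℕ) : halfChoose j = Ring.choose (1 / 2 : ℝ) j := by
  rw [Ring.choose_eq_smul, ← Polynomial.aeval_eq_smeval, Polynomial.aeval_def,
    Polynomial.eval₂_eq_eval_map, descPochhammer_map, descPochhammer_eval_eq_prod_range,
    halfChoose, smul_eq_mul, div_eq_inv_mul]

open PowerSeries

section
variable {R A : Type*} [CommRing R] [Ring A] [Algebra R A] {a : A} {k : ℕ}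

theorem aeval_trunc_eq_sum_range (f : R⟦X⟧) :
    Polynomial.aeval a (trunc k f) = ∑ i ∈ Finset.range k, coeff i f • a ^ i := by
  simp only [Polynomial.aeval_def, eval₂_trunc_eq_sum_range, Algebra.smul_def]

theorem aeval_trunc_coe_of_pow_eq_zero (ha : a ^ k = 0) (p : Polynomial R) :
    Polynomial.aeval a (trunc k (p : R⟦X⟧)) = Polynomial.aeval a p := by
  obtain ⟨q, hq⟩ : Polynomial.X ^ k ∣ p - trunc k (p : R⟦X⟧) := by
    rw [Polynomial.X_pow_dvd_iff]
    intro d hd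
    simp [coeff_trunc, hd]
  rw [eq_comm, ← sub_eq_zero, ← map_sub, hq, map_mul, map_pow, Polynomial.aeval_X, ha, zero_mul]

theorem aeval_trunc_mul_of_pow_eq_zero (ha : a ^ k = 0) (f g : R⟦X⟧) :
    Polynomial.aeval a (trunc k (f * g)) =
      Polynomial.aeval a (trunc k f) * Polynomial.aeval a (trunc k g) := by
  rw [← trunc_trunc_mul_trunc, ← Polynomial.coe_mul, aeval_trunc_coe_of_pow_eq_zero ha, map_mul]

end

section
variable {R A : Type*} [CommRing R] [BinomialRing R] [Ring A] [Algebra R A] {a : A} {k : ℕ}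

theorem aeval_trunc_binomialSeries_natCast (ha : a ^ k = 0) (m : ℕ) :
    Polynomial.aeval a (trunc k (binomialSeries R (m : R))) = (1 + a) ^ m := by
  have hcoe : ((1 + X) ^ m : R⟦X⟧) = ((1 + Polynomial.X) ^ m : Polynomial R) := by simp
  rw [binomialSeries_nat, hcoe, aeval_trunc_coe_of_pow_eq_zero ha]
  simp

theorem aeval_trunc_binomialSeries_pow (ha : a ^ k = 0) (r : R) (d : ℕ) :
    Polynomial.aeval a (trunc k (binomialSeries R r)) ^ d =
      Polynomial.aeval a (trunc k (binomialSeries R (d • r))) := by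
  induction d with
  | zero => simpa using (aeval_trunc_binomialSeries_natCast (R := R) ha 0).symm
  | succ d ih =>
    rw [pow_succ, ih, ← aeval_trunc_mul_of_pow_eq_zero ha, ← binomialSeries_add, succ_nsmul]

end

/-- If `Y` is an `n × n` real matrix with `Y ^ k = 0` and
`Z = I + ∑_{j=1}^{k-1} (1/2 choose j) Y^j`, then `Z ^ 2 = I + Y`. -/
theorem square_root_of_unipotent {n k : ℕ} (hk : 0 < k)
    (Y : Matrix (Fin n) (Fin n) ℝ) (hY : Y ^ k = 0)
    (Z : Matrix (Fin n) (Fin n) ℝ)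
    (hZ : Z = 1 + ∑ j ∈ Finset.Icc 1 (k - 1), halfChoose j • Y ^ j) :
    Z ^ 2 = 1 + Y := by
  have hZ_eval : Z = Polynomial.aeval Y (trunc k (binomialSeries ℝ (1 / 2 : ℝ))) := by
    rw [hZ, aeval_trunc_eq_sum_range, Finset.range_eq_Ico, Finset.sum_eq_sum_Ico_succ_bot hk,
      Finset.Icc_sub_one_right_eq_Ico_of_not_isMin (by simpa using hk.ne')]
    simp [halfChoose_eq_choose]
  rw [hZ_eval, aeval_trunc_binomialSeries_pow hY, two_nsmul, add_halves,
    ← Nat.cast_one, aeval_trunc_binomialSeries_natCast hY, pow_one]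
end

section
/- Let Y be an n×n real matrix with Y^k = 0, and let Z = I + Σ_{j=1}^{k-1} binom(1/2, j) Y^j. If M is a symmetric n×n real matrix satisfying M·Y = Yᵀ·M, then M·Z = Zᵀ·M, and consequently M·Z² = Zᵀ·M·Z; in particular M·(I+Y) is congruent to M via the invertible matrix Z. -/
open Matrix Polynomial

lemma halfChoose_zero : halfChoose 0 = 1 := by simp [halfChoose]

lemma halfChoose_succ (j : ℕ) :
    ((j : ℝ) + 1) * halfChoose (j + 1) = (1 / 2 - j) * halfChoose j := by
  have h1 : (Nat.factorial (j+1) : ℝ) = ((j:ℝ)+1) * Nat.factorial j := by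
    push_cast [Nat.factorial_succ]; ring
  have h2 : (Nat.factorial j : ℝ) ≠ 0 := Nat.cast_ne_zero.2 (Nat.factorial_ne_zero j)
  have h3 : ((j:ℝ) + 1) ≠ 0 := by positivity
  simp only [halfChoose, Finset.prod_range_succ, h1]
  field_simp

noncomputable def cc (m : ℕ) : ℝ :=
  ∑ i ∈ Finset.range (m+1), halfChoose i * halfChoose (m - i)

lemma sym_sum (m : ℕ) :
    ∑ i ∈ Finset.range (m+1), (i : ℝ) * (halfChoose i * halfChoose (m - i)) =
    ∑ i ∈ Finset.range (m+1), ((m : ℝ) - i) * (halfChoose i * halfChoose (m - i)) := by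
  rw [← Finset.sum_range_reflect]
  apply Finset.sum_congr rfl
  intro j hj
  have hjm : j ≤ m := by simpa [Nat.lt_succ_iff] using hj
  have h1 : m + 1 - 1 - j = m - j := by omega
  have h2 : m - (m - j) = j := by omega
  rw [h1, h2]
  have : ((m - j : ℕ) : ℝ) = (m:ℝ) - j := by
    push_cast [Nat.cast_sub hjm]; ring
  rw [this]
  ring

lemma weighted_sum (m : ℕ) :
    (2:ℝ) * ∑ i ∈ Finset.range (m+1), (i : ℝ) * (halfChoose i * halfChoose (m - i)) =
    (m : ℝ) * cc m := by
  have := sym_sum m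
  have h : (2:ℝ) * ∑ i ∈ Finset.range (m+1), (i : ℝ) * (halfChoose i * halfChoose (m - i)) =
      (∑ i ∈ Finset.range (m+1), (i : ℝ) * (halfChoose i * halfChoose (m - i))) +
      (∑ i ∈ Finset.range (m+1), ((m:ℝ) - i) * (halfChoose i * halfChoose (m - i))) := by
    rw [← this]; ring
  rw [h, ← Finset.sum_add_distrib, cc, Finset.mul_sum]
  apply Finset.sum_congr rfl
  intro i _
  ring

lemma cc_rec (m : ℕ) : ((m : ℝ) + 1) * cc (m+1) = (1 - (m:ℝ)) * cc m := by
  have step1 : ((m : ℝ) + 1) * cc (m+1) =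
      (2:ℝ) * ∑ i ∈ Finset.range (m+2), (i : ℝ) * (halfChoose i * halfChoose (m+1 - i)) := by
    have hs := sym_sum (m+1)
    have : ((m : ℝ) + 1) * cc (m+1) =
        (∑ i ∈ Finset.range (m+2), (i : ℝ) * (halfChoose i * halfChoose (m+1 - i))) +
        (∑ i ∈ Finset.range (m+2), ((m:ℝ)+1 - i) * (halfChoose i * halfChoose (m+1 - i))) := by
      rw [← Finset.sum_add_distrib, cc, Finset.mul_sum]
      apply Finset.sum_congr rfl
      intro i _
      ring
    push_cast at hs
    rw [this, ← hs]
    ring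
  have step2 : ∑ i ∈ Finset.range (m+2), (i : ℝ) * (halfChoose i * halfChoose (m+1 - i)) =
      ∑ i ∈ Finset.range (m+1), ((1:ℝ)/2 - i) * (halfChoose i * halfChoose (m - i)) := by
    rw [Finset.sum_range_succ']
    simp only [Nat.cast_zero, zero_mul, add_zero]
    apply Finset.sum_congr rfl
    intro i _
    have h1 : m + 1 - (i + 1) = m - i := by omega
    rw [h1]
    have h2 := halfChoose_succ i
    push_cast
    calc ((i:ℝ)+1) * (halfChoose (i+1) * halfChoose (m - i))
        = (((i:ℝ)+1) * halfChoose (i+1)) * halfChoose (m - i) := by ring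
      _ = ((1/2 - (i:ℝ)) * halfChoose i) * halfChoose (m - i) := by rw [h2]
      _ = (1/2 - (i:ℝ)) * (halfChoose i * halfChoose (m - i)) := by ring
  have step3 : ∑ i ∈ Finset.range (m+1), ((1:ℝ)/2 - i) * (halfChoose i * halfChoose (m - i)) =
      (1/2) * cc m - ∑ i ∈ Finset.range (m+1), (i:ℝ) * (halfChoose i * halfChoose (m - i)) := by
    rw [cc, Finset.mul_sum, ← Finset.sum_sub_distrib]
    apply Finset.sum_congr rfl
    intro i _
    ring
  have hw := weighted_sum m
  rw [step1, step2, step3]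
  nlinarith [hw]

lemma cc_zero : cc 0 = 1 := by simp [cc, halfChoose_zero]

lemma cc_one : cc 1 = 1 := by
  have h1 : halfChoose 1 = 1/2 := by
    have := halfChoose_succ 0
    rw [halfChoose_zero] at this
    push_cast at this
    linarith
  simp [cc, Finset.sum_range_succ, halfChoose_zero, h1]
  norm_num

lemma cc_eq_zero (m : ℕ) (hm : 2 ≤ m) : cc m = 0 := by
  obtain ⟨l, rfl⟩ : ∃ l, m = l + 2 := ⟨m - 2, by omega⟩
  clear hm
  induction l with
  | zero =>
    have := cc_rec 1
    rw [cc_one] at this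
    norm_num at this
    exact this
  | succ l ih =>
    have h := cc_rec (l + 2)
    rw [ih, mul_zero] at h
    have hne : (((l + 2 : ℕ) : ℝ) + 1) ≠ 0 := by positivity
    have h2 : cc (l + 2 + 1) = 0 := (mul_eq_zero.mp h).resolve_left hne
    show cc (l + 1 + 2) = 0
    convert h2 using 2


noncomputable def pp (k : ℕ) : ℝ[X] := ∑ j ∈ Finset.range k, C (halfChoose j) * X ^ j

lemma pp_coeff (k i : ℕ) : (pp k).coeff i = if i < k then halfChoose i else 0 := by
  rw [pp, Polynomial.finset_sum_coeff]
  simp only [Polynomial.coeff_C_mul, Polynomial.coeff_X_pow, mul_ite, mul_one, mul_zero]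
  simp [Finset.sum_ite_eq, Finset.mem_range]

lemma key_dvd (k : ℕ) : (X : ℝ[X]) ^ k ∣ pp k * pp k - (1 + X) := by
  rw [Polynomial.X_pow_dvd_iff]
  intro d hd
  rw [Polynomial.coeff_sub, Polynomial.coeff_mul,
    Finset.Nat.sum_antidiagonal_eq_sum_range_succ_mk]
  have hsum : ∑ i ∈ Finset.range (d+1), (pp k).coeff i * (pp k).coeff (d - i) = cc d := by
    apply Finset.sum_congr rfl
    intro i hi
    have hi' : i ≤ d := Nat.lt_succ_iff.mp (Finset.mem_range.mp hi)
    rw [pp_coeff, pp_coeff, if_pos (by omega), if_pos (by omega)]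
  rw [hsum]
  rcases Nat.lt_or_ge d 2 with h2 | h2
  · interval_cases d
    · simp [cc_zero]
    · simp [cc_one, Polynomial.coeff_add, Polynomial.coeff_one]
  · rw [cc_eq_zero d h2]
    have c1 : (1 : ℝ[X]).coeff d = 0 := by
      rw [Polynomial.coeff_one, if_neg (by omega : ¬ d = 0)]
    have c2 : (X : ℝ[X]).coeff d = 0 := by
      rw [Polynomial.coeff_X, if_neg (by omega : ¬ 1 = d)]
    rw [Polynomial.coeff_add, c1, c2]
    ring

/-- If `Y ^ k = 0`, `Z = I + ∑_{j=1}^{k-1} (1/2 choose j) Y^j`, and `M` is symmetric with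
`M Y = Yᵀ M`, then `M Z = Zᵀ M`, hence `M (I + Y) = Zᵀ M Z`; moreover `Z` is invertible,
so `M (I + Y)` is congruent to `M` via `Z`. -/
theorem congruence_via_unipotent_root {n k : ℕ} (hk : 0 < k)
    (Y : Matrix (Fin n) (Fin n) ℝ) (hY : Y ^ k = 0)
    (Z : Matrix (Fin n) (Fin n) ℝ)
    (hZ : Z = 1 + ∑ j ∈ Finset.Icc 1 (k - 1), halfChoose j • Y ^ j)
    (M : Matrix (Fin n) (Fin n) ℝ) (hM : M.IsSymm) (hMY : M * Y = Yᵀ * M) :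
    M * Z = Zᵀ * M ∧ M * (1 + Y) = Zᵀ * M * Z ∧ IsUnit Z := by
  have hrange : Finset.range k = insert 0 (Finset.Icc 1 (k - 1)) := by
    ext j
    simp only [Finset.mem_range, Finset.mem_insert, Finset.mem_Icc]
    omega
  have h0notin : 0 ∉ Finset.Icc 1 (k - 1) := by simp
  have hZ' : Z = ∑ j ∈ Finset.range k, halfChoose j • Y ^ j := by
    rw [hZ, hrange, Finset.sum_insert h0notin, halfChoose_zero, pow_zero, one_smul]
  have haeval : (Polynomial.aeval Y) (pp k) = Z := by
    rw [pp, map_sum, hZ']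
    apply Finset.sum_congr rfl
    intro j _
    rw [_root_.map_mul, Polynomial.aeval_C, map_pow, Polynomial.aeval_X, Algebra.smul_def]
  have hZZ : Z * Z = 1 + Y := by
    obtain ⟨q, hq⟩ := key_dvd k
    have h := congrArg (Polynomial.aeval Y) hq
    simp only [map_sub, _root_.map_mul, map_add, _root_.map_one, map_pow, Polynomial.aeval_X, haeval] at h
    rw [hY, zero_mul] at h
    have := sub_eq_zero.mp h
    rw [this]
  have hpow : ∀ j, M * Y ^ j = (Yᵀ) ^ j * M := by
    intro j
    induction j with
    | zero => simp
    | succ j ih =>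
      rw [pow_succ, pow_succ, ← mul_assoc, ih, mul_assoc, hMY, ← mul_assoc]
  have hMZ : M * Z = Zᵀ * M := by
    rw [hZ', Finset.mul_sum, transpose_sum, Finset.sum_mul]
    apply Finset.sum_congr rfl
    intro j _
    rw [mul_smul_comm, hpow, transpose_smul, transpose_pow, smul_mul_assoc]
  refine ⟨hMZ, ?_, ?_⟩
  · rw [← hZZ, ← mul_assoc, hMZ]
  · have hN : IsNilpotent (∑ j ∈ Finset.Icc 1 (k - 1), halfChoose j • Y ^ j) := by
      apply Commute.isNilpotent_sum
      · intro j hj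
        refine ⟨k, ?_⟩
        rw [_root_.smul_pow]
        have hjk : k ≤ j * k := Nat.le_mul_of_pos_left k (Finset.mem_Icc.mp hj).1
        rw [← pow_mul, pow_eq_zero_of_le hjk hY, smul_zero]
      · intro i j _ _
        exact ((Commute.pow_pow_self Y i j).smul_left _).smul_right _
    rw [hZ]
    exact hN.isUnit_one_add
end

section
/- Let M be an s×s real symmetric matrix, U an s×t real matrix, W a t×t real matrix, and let P denote the orthogonal projection of ℝ^t onto the range of Wᵀ. Then for every real λ, the block matrix [[M + λ·U·P·Uᵀ, λ·U·Wᵀ],[λ·W·Uᵀ, λ·W·Wᵀ]] is congruent to the block diagonal matrix [[M, 0],[0, λ·W·Wᵀ]] via an invertible matrix S independent of λ. -/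
open Matrix

/-!
Since `range (P Uᵀ) ⊆ range P = range Wᵀ`, there is `X` with `Wᵀ X = P Uᵀ`. Conjugating
`diag(M, D)` by the lower unitriangular `S = [[1, 0], [X, 1]]` produces
`[[M + Xᵀ D X, Xᵀ D], [D X, D]]`, and for `D = λ W Wᵀ` these blocks are the required ones:
`P` is the identity on `range Wᵀ`, so `P Wᵀ = Wᵀ`, and by symmetry `W P = W`.
-/

namespace Matrix

variable {m n k R : Type*}

section CommSemiring

variable [CommSemiring R]

theorem exists_mul_eq_of_range_mulVecLin_le [Fintype n] [Fintype k] [DecidableEq k]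
    {A : Matrix m n R} {B : Matrix m k R}
    (h : LinearMap.range B.mulVecLin ≤ LinearMap.range A.mulVecLin) :
    ∃ C : Matrix n k R, A * C = B := by
  have hcol : ∀ j, ∃ x, A *ᵥ x = B.col j := fun j => h ⟨Pi.single j 1, mulVec_single_one B j⟩
  choose x hx using hcol
  refine ⟨(of x)ᵀ, ext fun i j => ?_⟩
  simpa [mulVec, mul_apply, dotProduct] using congrFun (hx j) i

theorem mul_eq_self_of_range_mulVecLin_le [Fintype m] [Fintype k] [DecidableEq k]
    {P : Matrix m m R} {B : Matrix m k R}
    (hP : P * P = P) (h : LinearMap.range B.mulVecLin ≤ LinearMap.range P.mulVecLin) :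
    P * B = B := by
  obtain ⟨C, rfl⟩ := exists_mul_eq_of_range_mulVecLin_le h
  rw [← Matrix.mul_assoc, hP]

theorem fromBlocks_congr_lowerUnitriangular [Fintype m] [DecidableEq m] [Fintype k]
    [DecidableEq k] (N : Matrix m m R) (D : Matrix k k R) (X : Matrix k m R) :
    (fromBlocks 1 0 X 1)ᵀ * fromBlocks N 0 0 D * fromBlocks 1 0 X 1 =
      fromBlocks (N + Xᵀ * D * X) (Xᵀ * D) (D * X) D := by
  simp [fromBlocks_transpose, fromBlocks_multiply, Matrix.mul_assoc]

end CommSemiring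

theorem isUnit_fromBlocks_one_zero_one [CommRing R] [Fintype m] [DecidableEq m] [Fintype k]
    [DecidableEq k] (X : Matrix k m R) :
    IsUnit (fromBlocks 1 0 X 1 : Matrix (m ⊕ k) (m ⊕ k) R) := by
  simp [isUnit_iff_isUnit_det]

end Matrix

theorem bordered_congruence_general {s t : ℕ}
    (M : Matrix (Fin s) (Fin s) ℝ)
    (U : Matrix (Fin s) (Fin t) ℝ) (W : Matrix (Fin t) (Fin t) ℝ)
    (P : Matrix (Fin t) (Fin t) ℝ) (hPsymm : P.IsSymm) (hPidem : P * P = P)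
    (hPrange : LinearMap.range P.mulVecLin = LinearMap.range Wᵀ.mulVecLin) :
    ∃ S : Matrix (Fin s ⊕ Fin t) (Fin s ⊕ Fin t) ℝ, IsUnit S ∧
      ∀ lam : ℝ,
        Matrix.fromBlocks (M + lam • (U * P * Uᵀ)) (lam • (U * Wᵀ))
          (lam • (W * Uᵀ)) (lam • (W * Wᵀ)) =
        Sᵀ * Matrix.fromBlocks M 0 0 (lam • (W * Wᵀ)) * S := by
  have hWP : W * P = W := by
    rw [← transpose_transpose (W * P), transpose_mul, hPsymm.eq,
      mul_eq_self_of_range_mulVecLin_le hPidem hPrange.ge, transpose_transpose]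
  obtain ⟨X, hX⟩ : ∃ X : Matrix (Fin t) (Fin s) ℝ, Wᵀ * X = P * Uᵀ := by
    refine exists_mul_eq_of_range_mulVecLin_le (hPrange ▸ ?_)
    rw [mulVecLin_mul]
    exact LinearMap.range_comp_le_range _ _
  have hDX : W * Wᵀ * X = W * Uᵀ := by
    rw [Matrix.mul_assoc, hX, ← Matrix.mul_assoc, hWP]
  have hXD : Xᵀ * (W * Wᵀ) = U * Wᵀ := by
    simpa [transpose_mul, Matrix.mul_assoc] using congrArg transpose hDX
  have hXDX : Xᵀ * (W * Wᵀ) * X = U * P * Uᵀ := by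
    rw [hXD, Matrix.mul_assoc, hX, ← Matrix.mul_assoc]
  refine ⟨fromBlocks 1 0 X 1, isUnit_fromBlocks_one_zero_one X, fun lam => ?_⟩
  rw [fromBlocks_congr_lowerUnitriangular, Matrix.mul_smul, Matrix.smul_mul, Matrix.smul_mul,
    hXDX, hXD, hDX]

/-- Congruence of the bordered matrix `[[M + λ U P Uᵀ, λ U Wᵀ],[λ W Uᵀ, λ W Wᵀ]]` to
`diag(M, λ W Wᵀ)` via an invertible matrix `S` independent of `λ`, where `P` is the
orthogonal projection onto the range of `Wᵀ` (a symmetric idempotent with that range). -/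
theorem bordered_congruence {s t : ℕ}
    (M : Matrix (Fin s) (Fin s) ℝ) (hM : M.IsSymm)
    (U : Matrix (Fin s) (Fin t) ℝ) (W : Matrix (Fin t) (Fin t) ℝ)
    (P : Matrix (Fin t) (Fin t) ℝ) (hPsymm : P.IsSymm) (hPidem : P * P = P)
    (hPrange : LinearMap.range P.mulVecLin = LinearMap.range Wᵀ.mulVecLin) :
    ∃ S : Matrix (Fin s ⊕ Fin t) (Fin s ⊕ Fin t) ℝ, IsUnit S ∧
      ∀ lam : ℝ,
        Matrix.fromBlocks (M + lam • (U * P * Uᵀ)) (lam • (U * Wᵀ))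
          (lam • (W * Uᵀ)) (lam • (W * Wᵀ)) =
        Sᵀ * Matrix.fromBlocks M 0 0 (lam • (W * Wᵀ)) * S :=
  bordered_congruence_general M U W P hPsymm hPidem hPrange
end

section
/- (CHSY Lemma) If u₁, …, u_k are linearly independent vectors in ℝⁿ, then the dimension of the span of the set { (H u₁, H u₂, …, H u_k) ∈ (ℝⁿ)^k : H an n×n real symmetric matrix } equals kn − k(k−1)/2. Equivalently, its codimension in ℝ^{kn} is k(k−1)/2, independently of n. -/
/-!
Encode the tuple `x` as the matrix with rows `x i`, and `u` likewise. Then the tuples `(H u_i)`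
with `H` symmetric are the matrices `u H`, and these are exactly the `X` with `X uᵀ` symmetric,
i.e. the tuples with `x i ⬝ u j = x j ⬝ u i`. Linear independence gives a right inverse `C` of `u`,
which both produces the symmetric `H` and makes the `k (k - 1) / 2` constraints
`x i ⬝ u j - x j ⬝ u i` (`i < j`) independent, so rank–nullity gives `k n - k (k - 1) / 2`.
-/

open Matrix

variable {ι m R K : Type*} [Fintype ι] [Fintype m] [DecidableEq ι]

section CommRing

variable [CommRing R]

/-- With `A * C = 1`, the matrix `Xᵀ Cᵀ + C X - C X Aᵀ Cᵀ` is a symmetric solution of `A H = X`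
as soon as `X Aᵀ` is symmetric. -/
theorem Matrix.exists_isSymm_mul_eq {A : Matrix ι m R} {C : Matrix m ι R} (hAC : A * C = 1)
    {X : Matrix ι m R} (hX : (X * Aᵀ).IsSymm) : ∃ H : Matrix m m R, H.IsSymm ∧ A * H = X := by
  have hXA : A * Xᵀ = X * Aᵀ := by
    simpa only [transpose_mul, transpose_transpose] using hX.eq
  refine ⟨Xᵀ * Cᵀ + C * X - C * (X * Aᵀ) * Cᵀ, ?_, ?_⟩
  · have hCXC : (C * (X * Aᵀ) * Cᵀ)ᵀ = C * (X * Aᵀ) * Cᵀ := by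
      rw [transpose_mul, transpose_mul, hX.eq, transpose_transpose]
      simp only [Matrix.mul_assoc]
    rw [IsSymm, transpose_sub, transpose_add, hCXC, transpose_mul Xᵀ, transpose_mul C X,
      transpose_transpose, transpose_transpose, add_comm (C * X)]
  · simp only [Matrix.mul_add, Matrix.mul_sub, ← Matrix.mul_assoc, hAC, Matrix.one_mul, hXA]
    abel

omit [Fintype ι] [DecidableEq ι] in
theorem mulVec_dotProduct_of_isSymm {H : Matrix m m R} (hH : H.IsSymm) (v w : m → R) :
    H *ᵥ v ⬝ᵥ w = H *ᵥ w ⬝ᵥ v := by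
  rw [dotProduct_comm, dotProduct_mulVec, ← mulVec_transpose, hH.eq]

theorem exists_isSymm_mulVec_eq_iff {u : ι → m → R} {C : Matrix m ι R} (hC : of u * C = 1)
    (x : ι → m → R) :
    (∃ H : Matrix m m R, H.IsSymm ∧ x = fun i => H *ᵥ u i) ↔
      ∀ i j, x i ⬝ᵥ u j = x j ⬝ᵥ u i := by
  constructor
  · rintro ⟨H, hH, rfl⟩ i j
    exact mulVec_dotProduct_of_isSymm hH (u i) (u j)
  · intro hx
    obtain ⟨H, hH, hHx⟩ := exists_isSymm_mul_eq hC (X := of x) (ext fun i j => (hx i j).symm)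
    refine ⟨H, hH, funext fun i => ?_⟩
    rw [← vecMul_transpose, hH.eq]
    exact (congr_fun hHx i).symm

end CommRing

variable [Field K]

theorem exists_mul_eq_one_of_linearIndependent {u : ι → m → K} (hu : LinearIndependent K u) :
    ∃ C : Matrix m ι K, of u * C = 1 := by
  refine mulVec_surjective_iff_exists_right_inverse.mp fun y => ?_
  have hrange : LinearMap.range (of u).mulVecLin = ⊤ := by
    apply Submodule.eq_top_of_finrank_eq
    rw [← rank, LinearIndependent.rank_matrix (M := of u) hu, Module.finrank_fintype_fun_eq_card]
  exact LinearMap.range_eq_top.mp hrange y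

variable [LinearOrder ι]

def skewDotProductLin (u : ι → m → K) : (ι → m → K) →ₗ[K] ({p : ι × ι // p.1 < p.2} → K) where
  toFun x p := x p.1.1 ⬝ᵥ u p.1.2 - x p.1.2 ⬝ᵥ u p.1.1
  map_add' x y := by ext p; simp only [Pi.add_apply, add_dotProduct]; ring
  map_smul' c x := by
    ext p; simp only [Pi.smul_apply, smul_dotProduct, smul_eq_mul, RingHom.id_apply]; ring

omit [Fintype ι] [DecidableEq ι] in
theorem mem_ker_skewDotProductLin (u : ι → m → K) (x : ι → m → K) :
    x ∈ LinearMap.ker (skewDotProductLin u) ↔ ∀ i j, x i ⬝ᵥ u j = x j ⬝ᵥ u i := by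
  simp only [LinearMap.mem_ker, funext_iff, Pi.zero_apply, skewDotProductLin, LinearMap.coe_mk,
    AddHom.coe_mk, sub_eq_zero, Subtype.forall]
  constructor
  · intro h i j
    rcases lt_trichotomy i j with hij | rfl | hij
    · exact h (i, j) hij
    · rfl
    · exact (h (j, i) hij).symm
  · intro h p _
    exact h p.1 p.2

theorem skewDotProductLin_surjective {u : ι → m → K} {C : Matrix m ι K} (hC : of u * C = 1) :
    Function.Surjective (skewDotProductLin u) := by
  intro y
  let Y : Matrix ι ι K := of fun i j => if h : i < j then y ⟨(i, j), h⟩ else 0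
  have hYu : Y * Cᵀ * (of u)ᵀ = Y := by
    rw [Matrix.mul_assoc, ← transpose_mul, hC, transpose_one, Matrix.mul_one]
  refine ⟨Y * Cᵀ, funext fun p => ?_⟩
  change (Y * Cᵀ * (of u)ᵀ) p.1.1 p.1.2 - (Y * Cᵀ * (of u)ᵀ) p.1.2 p.1.1 = y p
  simp [hYu, Y, p.2, p.2.not_gt]

theorem finrank_ker_skewDotProductLin {u : ι → m → K} {C : Matrix m ι K} (hC : of u * C = 1) :
    Module.finrank K (LinearMap.ker (skewDotProductLin u)) =
      Fintype.card ι * Fintype.card m - (Fintype.card ι).choose 2 := by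
  have hrank := (skewDotProductLin u).finrank_range_add_finrank_ker
  rw [LinearMap.range_eq_top.mpr (skewDotProductLin_surjective hC), finrank_top,
    Module.finrank_fintype_fun_eq_card, Fintype.card_subtype, Fintype.card_product_filter_lt,
    Module.finrank_pi_fintype, Module.finrank_fintype_fun_eq_card, Finset.sum_const,
    Finset.card_univ, smul_eq_mul] at hrank
  omega

/-- **CHSY Lemma.** If `u₁, …, u_k` are linearly independent vectors in `ℝⁿ`, then the
span of `{(H u₁, …, H u_k) : H symmetric n × n}` inside `ℝ^{kn}` has dimension
`k n − k (k − 1) / 2`. -/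
theorem chsy_lemma {n k : ℕ} (u : Fin k → (Fin n → ℝ))
    (hu : LinearIndependent ℝ u) :
    Module.finrank ℝ (Submodule.span ℝ
      {x : Fin k → Fin n → ℝ |
        ∃ H : Matrix (Fin n) (Fin n) ℝ, H.IsSymm ∧ x = fun i => H *ᵥ u i}) =
      k * n - k * (k - 1) / 2 := by
  obtain ⟨C, hC⟩ := exists_mul_eq_one_of_linearIndependent hu
  have hset : {x : Fin k → Fin n → ℝ |
      ∃ H : Matrix (Fin n) (Fin n) ℝ, H.IsSymm ∧ x = fun i => H *ᵥ u i} =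
      LinearMap.ker (skewDotProductLin u) :=
    Set.ext fun x => (exists_isSymm_mulVec_eq_iff hC x).trans (mem_ker_skewDotProductLin u x).symm
  rw [hset, Submodule.span_eq, finrank_ker_skewDotProductLin hC, Fintype.card_fin,
    Fintype.card_fin, Nat.choose_two_right]
end

section
/- Let E, F, G be n×n real symmetric matrices with F ≠ 0, F ⪰ 0, G ⪰ 0, and ker(G) ⊆ ker(F) ∩ ker(E). Let P be the orthogonal projection of ℝⁿ onto ker(F). Then there exists ε < 0 such that for each δ ∈ [ε, 0) there exists λ_δ < 0 such that for all λ ≤ λ_δ, the number of strictly positive eigenvalues of E + λF + δG equals the number of strictly positive eigenvalues of P·E·P. -/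
open Matrix

/-- The number of strictly positive eigenvalues (with multiplicity) of a real symmetric
(Hermitian) matrix; `0` for non-Hermitian matrices. -/
noncomputable def posIdx {n : Type*} [Fintype n] [DecidableEq n] (A : Matrix n n ℝ) : ℕ :=
  if h : A.IsHermitian then Fintype.card {i // 0 < h.eigenvalues i} else 0

/-!
Put `p = μ₊(PEP)` and `V = ker F = range P`; on `V` the forms of `E` and `PEP` agree. Positive
indices are compared through Sylvester's characterisation: `μ₊(A)` is the largest dimension of a
subspace on which `xᵀAx` is positive definite, and `n - μ₊(A)` is the largest dimension of one on
which it is `≤ 0`.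

Lower bound: `E` is positive definite on a `p`-dimensional subspace of `V`. There `λF` vanishes,
and a small `δG` does not destroy positivity.

Upper bound: if `PEP` is `≤ 0` on `Wm` with `dim Wm = n - p`, then `E` is `≤ 0` on
`V₀ = Wm ∩ V`, and stays so after adding `ker G`, which lies in the kernel of every
`E + λF + δG`. Let `Z` be a complement of `V`. On a complement `W` of `ker G` in
`V₀ + ker G + Z`, the form of `E + δG` (`δ < 0`) is negative definite on `W ∩ ker F`, so by
Debreu's lemma `E + λF + δG` is negative definite on `W` for `λ ≪ 0`. Hence it is `≤ 0` on
`V₀ + Z`, whose dimension is at least `n - p`.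
-/

open Module
open LinearMap (ker)

theorem QuadraticForm.exists_nonpos_sigPos_add_finrank_eq {𝕜 M : Type*} [Field 𝕜]
    [LinearOrder 𝕜] [IsStrictOrderedRing 𝕜] [AddCommGroup M] [Module 𝕜 M]
    [FiniteDimensional 𝕜 M] (Q : QuadraticForm 𝕜 M) :
    ∃ V : Submodule 𝕜 M, (∀ x ∈ V, Q x ≤ 0) ∧ sigPos Q + finrank 𝕜 V = finrank 𝕜 M := by
  obtain ⟨N, hN, hNneg⟩ := exists_finrank_eq_sigNeg_and_negDef Q
  have hdisj : N ⊓ Q.radical = ⊥ := by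
    refine (Submodule.eq_bot_iff _).2 fun x ⟨hxN, hxR⟩ => ?_
    by_contra hx
    have := hNneg ⟨x, hxN⟩ (by simpa using hx)
    simp [(QuadraticMap.mem_radical_iff'.1 hxR).1] at this
  refine ⟨N ⊔ Q.radical, fun x hx => ?_, ?_⟩
  · obtain ⟨v, hv, r, hr, rfl⟩ := Submodule.mem_sup.1 hx
    rw [add_comm, (QuadraticMap.mem_radical_iff'.1 hr).2 v]
    simpa using hNneg.nonneg ⟨v, hv⟩
  · have := Submodule.finrank_sup_add_finrank_inf_eq N Q.radical
    rw [hdisj, finrank_bot, add_zero] at this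
    rw [this, hN, ← add_assoc, sigPos_add_sigNeg_add_radical]

theorem Submodule.finrank_le_finrank_inf_sup_of_isCompl {K M : Type*} [DivisionRing K]
    [AddCommGroup M] [Module K M] [FiniteDimensional K M] {V Z : Submodule K M}
    (hVZ : IsCompl V Z) (W : Submodule K M) : finrank K W ≤ finrank K ↥(W ⊓ V ⊔ Z) := by
  have hWV := finrank_sup_add_finrank_inf_eq W V
  have hVZ' := finrank_sup_add_finrank_inf_eq V Z
  have hWVZ := finrank_sup_add_finrank_inf_eq (W ⊓ V) Z
  have hWVZ_bot : W ⊓ V ⊓ Z = ⊥ := eq_bot_iff.2 fun x hx => hVZ.disjoint.le_bot ⟨hx.1.2, hx.2⟩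
  rw [hVZ.sup_eq_top, hVZ.inf_eq_bot, finrank_top, finrank_bot] at hVZ'
  rw [hWVZ_bot, finrank_bot] at hWVZ
  have := finrank_le (W ⊔ V)
  omega

namespace Matrix

section Quadratic

variable {R ι κ : Type*} [CommSemiring R] [Fintype ι] [Fintype κ]

theorem dotProduct_add_smul_mulVec (A F : Matrix ι ι R) (t : R) (x : ι → R) :
    x ⬝ᵥ (A + t • F) *ᵥ x = x ⬝ᵥ A *ᵥ x + t * (x ⬝ᵥ F *ᵥ x) := by
  simp [add_mulVec, smul_mulVec, dotProduct_add]

theorem mulVec_dotProduct_mulVec_mulVec (A : Matrix ι ι R) (B : Matrix ι κ R) (y : κ → R) :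
    B *ᵥ y ⬝ᵥ A *ᵥ (B *ᵥ y) = y ⬝ᵥ (Bᵀ * A * B) *ᵥ y := by
  rw [← mulVec_mulVec, ← mulVec_mulVec, dotProduct_mulVec y, vecMul_transpose]

end Quadratic

variable {ι κ : Type*} [Fintype ι] [Fintype κ]

def PosDefOn (A : Matrix ι ι ℝ) (W : Submodule ℝ (ι → ℝ)) : Prop :=
  ∀ x ∈ W, x ≠ 0 → 0 < x ⬝ᵥ A *ᵥ x

def NonposOn (A : Matrix ι ι ℝ) (W : Submodule ℝ (ι → ℝ)) : Prop :=
  ∀ x ∈ W, x ⬝ᵥ A *ᵥ x ≤ 0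

theorem PosSemidef.dotProduct_mulVec_pos {F : Matrix ι ι ℝ} (hF : F.PosSemidef) {x : ι → ℝ}
    (hx : F *ᵥ x ≠ 0) : 0 < x ⬝ᵥ F *ᵥ x := by
  refine (hF.dotProduct_mulVec_nonneg x).lt_of_ne' ?_
  simpa using (hF.dotProduct_mulVec_zero_iff x).not.2 hx

theorem NonposOn.sup_of_le_ker {A : Matrix ι ι ℝ} (hA : A.IsSymm) {W K : Submodule ℝ (ι → ℝ)}
    (hW : A.NonposOn W) (hK : K ≤ ker A.mulVecLin) : A.NonposOn (W ⊔ K) := by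
  intro x hx
  obtain ⟨w, hw, k, hk, rfl⟩ := Submodule.mem_sup.1 hx
  have hAk : A *ᵥ k = 0 := hK hk
  have hkA : k ⬝ᵥ A *ᵥ w = 0 := by
    rw [dotProduct_mulVec, ← mulVec_transpose, hA.eq, hAk, zero_dotProduct]
  simpa [mulVec_add, hAk, add_dotProduct, hkA] using hW w hw

theorem PosDefOn.map {A : Matrix ι ι ℝ} {B : Matrix ι κ ℝ} {W : Submodule ℝ (κ → ℝ)}
    (h : (Bᵀ * A * B).PosDefOn W) : A.PosDefOn (W.map B.mulVecLin) := by
  rintro _ ⟨x, hx, rfl⟩ hx0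
  rw [mulVecLin_apply, mulVec_dotProduct_mulVec_mulVec]
  exact h x hx fun h0 => hx0 (by simp [h0])

theorem PosDefOn.finrank_map {A : Matrix ι ι ℝ} {B : Matrix ι κ ℝ} {W : Submodule ℝ (κ → ℝ)}
    (h : (Bᵀ * A * B).PosDefOn W) : finrank ℝ (W.map B.mulVecLin) = finrank ℝ W := by
  have hinj : Function.Injective (B.mulVecLin ∘ₗ W.subtype) := by
    rw [← LinearMap.ker_eq_bot, Submodule.eq_bot_iff]
    intro x hx
    by_contra hx0
    have := h x x.2 (by simpa using hx0)
    rw [← mulVec_dotProduct_mulVec_mulVec] at this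
    simp_all
  rw [← LinearMap.finrank_range_of_inj hinj, LinearMap.range_comp, Submodule.range_subtype]

/-- **Debreu's lemma.** The sets where `A + t • F` is positive increase with `t` and cover the
compact unit sphere of `W`. -/
theorem exists_posDefOn_add_smul {A F : Matrix ι ι ℝ} {W : Submodule ℝ (ι → ℝ)}
    (hF : ∀ x ∈ W, 0 ≤ x ⬝ᵥ F *ᵥ x)
    (hA : ∀ x ∈ W, x ≠ 0 → x ⬝ᵥ F *ᵥ x = 0 → 0 < x ⬝ᵥ A *ᵥ x) :
    ∃ c : ℝ, ∀ t, c ≤ t → (A + t • F).PosDefOn W := by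
  set U : ℝ → Set W := fun t => {w | 0 < (w : ι → ℝ) ⬝ᵥ A *ᵥ w + t * ((w : ι → ℝ) ⬝ᵥ F *ᵥ w)}
  have hmono : Monotone U := fun s t hst w hw => by
    have := hF w w.2
    simp only [U, Set.mem_ofPred_eq] at hw ⊢
    nlinarith
  have hcover : Metric.sphere (0 : W) 1 ⊆ ⋃ t, U t := by
    intro w hw
    have hw0 : (w : ι → ℝ) ≠ 0 := by
      rintro h
      simp [Submodule.coe_eq_zero.1 h] at hw
    rcases (hF w w.2).eq_or_lt with h0 | hpos
    · exact Set.mem_iUnion.2 ⟨0, by simpa [U] using hA w w.2 hw0 h0.symm⟩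
    · refine Set.mem_iUnion.2 ⟨(1 - (w : ι → ℝ) ⬝ᵥ A *ᵥ w) / ((w : ι → ℝ) ⬝ᵥ F *ᵥ w), ?_⟩
      simp only [U, Set.mem_ofPred_eq]
      rw [div_mul_cancel₀ _ hpos.ne']
      linarith
  have hopen : ∀ t, IsOpen (U t) := fun t => isOpen_lt continuous_const (by fun_prop)
  obtain ⟨c, hc⟩ := (isCompact_sphere (0 : W) 1).elim_directed_cover U hopen hcover
    hmono.directed_le
  refine ⟨c, fun t hct x hx hx0 => ?_⟩
  have hxn : 0 < ‖x‖ := norm_pos_iff.2 hx0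
  have hu : (⟨‖x‖⁻¹ • x, W.smul_mem _ hx⟩ : W) ∈ Metric.sphere (0 : W) 1 := by
    simp [norm_smul, hxn.ne']
  have hxu := hmono hct (hc hu)
  simp only [U, Set.mem_ofPred_eq, mulVec_smul, smul_dotProduct, dotProduct_smul,
    smul_eq_mul] at hxu
  rw [dotProduct_add_smul_mulVec]
  exact pos_of_mul_pos_right (a := ‖x‖⁻¹ * ‖x‖⁻¹) (by linarith) (by positivity)

theorem exists_posDefOn_add_smul_add_smul {E F G : Matrix ι ι ℝ} (hG : G.PosSemidef)
    {W : Submodule ℝ (ι → ℝ)} (hEW : E.PosDefOn W) (hWF : W ≤ ker F.mulVecLin) :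
    ∃ ε : ℝ, ε < 0 ∧ ∀ δ : ℝ, ε ≤ δ → ∀ lam : ℝ, (E + lam • F + δ • G).PosDefOn W := by
  obtain ⟨c, hc⟩ := exists_posDefOn_add_smul (A := -G) (F := E) (W := W)
    (fun x hx => by
      rcases eq_or_ne x 0 with rfl | hx0
      · simp
      · exact (hEW x hx hx0).le)
    (fun x hx hx0 h0 => absurd h0 (hEW x hx hx0).ne')
  set c' := max c 1
  have hc' : 0 < c' := lt_max_of_lt_right one_pos
  refine ⟨-c'⁻¹, by simpa using hc', fun δ hδ lam x hx hx0 => ?_⟩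
  have hcE := hc c' (le_max_left c 1) x hx hx0
  have hFx : F *ᵥ x = 0 := hWF hx
  have hGx : 0 ≤ x ⬝ᵥ G *ᵥ x := by simpa using hG.dotProduct_mulVec_nonneg x
  have hδc : -1 ≤ c' * δ := by
    have := mul_le_mul_of_nonneg_left hδ hc'.le
    rwa [mul_neg, mul_inv_cancel₀ hc'.ne'] at this
  rw [dotProduct_add_smul_mulVec, neg_mulVec, dotProduct_neg] at hcE
  rw [dotProduct_add_smul_mulVec, dotProduct_add_smul_mulVec, hFx, dotProduct_zero, mul_zero,
    add_zero]
  nlinarith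

theorem exists_nonposOn_add_smul_add_smul {E F G : Matrix ι ι ℝ} (hE : E.IsSymm)
    (hF : F.PosSemidef) (hG : G.PosSemidef)
    (hker : ker G.mulVecLin ≤ ker F.mulVecLin ⊓ ker E.mulVecLin)
    {V₀ Z : Submodule ℝ (ι → ℝ)} (hV₀ : V₀ ≤ ker F.mulVecLin) (hEV₀ : E.NonposOn V₀)
    (hZ : Disjoint Z (ker F.mulVecLin)) {δ : ℝ} (hδ : δ < 0) :
    ∃ lamδ : ℝ, lamδ < 0 ∧ ∀ lam : ℝ, lam ≤ lamδ →
      (E + lam • F + δ • G).NonposOn (V₀ ⊔ Z) := by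
  set K := ker G.mulVecLin
  obtain ⟨W₀, hW₀⟩ := K.exists_isCompl
  set U := V₀ ⊔ K ⊔ Z
  have hUF : U ⊓ ker F.mulVecLin = V₀ ⊔ K := by
    rw [sup_inf_assoc_of_le _ (sup_le hV₀ (hker.trans inf_le_left)), hZ.eq_bot, sup_bot_eq]
  have hEK : E.NonposOn (V₀ ⊔ K) := hEV₀.sup_of_le_ker hE (hker.trans inf_le_right)
  obtain ⟨c, hc⟩ := exists_posDefOn_add_smul (A := -(E + δ • G)) (F := F) (W := W₀ ⊓ U)
    (fun x _ => by simpa using hF.dotProduct_mulVec_nonneg x)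
    (fun x hx hx0 hFx => by
      have hxF : F *ᵥ x = 0 := (hF.dotProduct_mulVec_zero_iff x).1 (by simpa using hFx)
      have hxK : x ∈ V₀ ⊔ K := hUF ▸ ⟨hx.2, hxF⟩
      have hGx : G *ᵥ x ≠ 0 := fun h => hx0 (hW₀.disjoint.le_bot ⟨h, hx.1⟩)
      have := hG.dotProduct_mulVec_pos hGx
      rw [neg_mulVec, dotProduct_neg, dotProduct_add_smul_mulVec]
      nlinarith [hEK x hxK])
  refine ⟨-max c 1, by simp, fun lam hlam => ?_⟩
  have hW : (E + lam • F + δ • G).NonposOn (W₀ ⊓ U) := by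
    intro x hx
    rcases eq_or_ne x 0 with rfl | hx0
    · simp
    have := hc (-lam) (by linarith [le_max_left c 1]) x hx hx0
    rw [dotProduct_add_smul_mulVec, neg_mulVec, dotProduct_neg, dotProduct_add_smul_mulVec] at this
    rw [dotProduct_add_smul_mulVec, dotProduct_add_smul_mulVec]
    linarith
  have hsymm : (E + lam • F + δ • G).IsSymm :=
    (hE.add ((isHermitian_iff_isSymm.1 hF.1).smul lam)).add
      ((isHermitian_iff_isSymm.1 hG.1).smul δ)
  have hKA : K ≤ ker (E + lam • F + δ • G).mulVecLin := fun x hx => by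
    obtain ⟨hFx, hEx⟩ := hker hx
    simp_all [K]
  have hU : W₀ ⊓ U ⊔ K = U := by
    rw [sup_comm, ← sup_inf_assoc_of_le W₀ (le_sup_right.trans le_sup_left : K ≤ U),
      hW₀.sup_eq_top, top_inf_eq]
  have hle : V₀ ⊔ Z ≤ W₀ ⊓ U ⊔ K := hU.symm ▸ sup_le_sup_right le_sup_left Z
  exact fun x hx => hW.sup_of_le_ker hsymm hKA x (hle hx)

variable [DecidableEq ι]

theorem toQuadraticForm'_apply {R : Type*} [CommRing R] (A : Matrix ι ι R) (x : ι → R) :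
    A.toQuadraticForm' x = x ⬝ᵥ A *ᵥ x := by
  simp [toQuadraticForm', toLinearMap₂'_apply']

namespace IsHermitian

variable {A : Matrix ι ι ℝ} (hA : A.IsHermitian)
include hA

theorem equivalent_weightedSumSquares :
    A.toQuadraticForm'.Equivalent (QuadraticMap.weightedSumSquares ℝ hA.eigenvalues) := by
  set U : Matrix ι ι ℝ := (hA.eigenvectorUnitary : Matrix ι ι ℝ)
  have hdiag : Uᵀ * A * U = diagonal hA.eigenvalues := by
    simpa [star_eq_conjTranspose] using hA.conjStarAlgAut_star_eigenvectorUnitary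
  refine ⟨.symm ⟨UnitaryGroup.toLinearEquiv hA.eigenvectorUnitary, fun y => ?_⟩⟩
  change A.toQuadraticForm' (U *ᵥ y) = _
  rw [toQuadraticForm'_apply, mulVec_dotProduct_mulVec_mulVec, hdiag,
    QuadraticMap.weightedSumSquares_apply]
  simp [dotProduct, mulVec_diagonal, mul_left_comm]

theorem posIdx_eq_sigPos : posIdx A = sigPos A.toQuadraticForm' := by
  rw [QuadraticForm.sigPos_of_equiv_weightedSumSquares hA.equivalent_weightedSumSquares,
    posIdx, dif_pos hA, ← Nat.card_eq_fintype_card, ← Nat.card_coe_set_eq]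
  rfl

theorem finrank_le_posIdx {W : Submodule ℝ (ι → ℝ)} (hW : A.PosDefOn W) :
    finrank ℝ W ≤ posIdx A := by
  rw [hA.posIdx_eq_sigPos]
  refine le_sigPos_of_posDef _ fun x hx => ?_
  simpa [toQuadraticForm'_apply] using hW x x.2 (by simpa using hx)

theorem posIdx_add_finrank_le {W : Submodule ℝ (ι → ℝ)} (hW : A.NonposOn W) :
    posIdx A + finrank ℝ W ≤ Fintype.card ι := by
  rw [hA.posIdx_eq_sigPos, ← Module.finrank_fintype_fun_eq_card ℝ]
  exact QuadraticForm.sigPos_add_finrank_le_of_nonpos fun x hx => by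
    simpa [toQuadraticForm'_apply] using hW x hx

theorem exists_posDefOn_finrank_eq_posIdx :
    ∃ W : Submodule ℝ (ι → ℝ), A.PosDefOn W ∧ finrank ℝ W = posIdx A := by
  obtain ⟨W, hW, hpos⟩ := exists_finrank_eq_sigPos_and_posDef A.toQuadraticForm'
  refine ⟨W, fun x hx hx0 => ?_, hW.trans hA.posIdx_eq_sigPos.symm⟩
  simpa [toQuadraticForm'_apply] using hpos ⟨x, hx⟩ (by simpa using hx0)

theorem exists_nonposOn_posIdx_add_finrank_eq :
    ∃ W : Submodule ℝ (ι → ℝ), A.NonposOn W ∧ posIdx A + finrank ℝ W = Fintype.card ι := by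
  obtain ⟨W, hW, hdim⟩ := QuadraticForm.exists_nonpos_sigPos_add_finrank_eq A.toQuadraticForm'
  refine ⟨W, fun x hx => by simpa [toQuadraticForm'_apply] using hW x hx, ?_⟩
  rwa [hA.posIdx_eq_sigPos, ← Module.finrank_fintype_fun_eq_card ℝ]

end IsHermitian

end Matrix

theorem posIdx_perturbation_general {n : ℕ} (E F G P : Matrix (Fin n) (Fin n) ℝ)
    (hE : E.IsSymm) (hF : F.PosSemidef) (hG : G.PosSemidef)
    (hker : LinearMap.ker G.mulVecLin ≤
      LinearMap.ker F.mulVecLin ⊓ LinearMap.ker E.mulVecLin)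
    (hPsymm : P.IsSymm) (hPidem : P * P = P)
    (hPrange : LinearMap.range P.mulVecLin = LinearMap.ker F.mulVecLin) :
    ∃ ε : ℝ, ε < 0 ∧ ∀ δ : ℝ, ε ≤ δ → δ < 0 →
      ∃ lamδ : ℝ, lamδ < 0 ∧ ∀ lam : ℝ, lam ≤ lamδ →
        posIdx (E + lam • F + δ • G) = posIdx (P * E * P) := by
  have hPEP : Pᵀ * E * P = P * E * P := by rw [hPsymm.eq]
  have hPEP_herm : (P * E * P).IsHermitian := by
    rw [isHermitian_iff_isSymm, ← hPEP]
    simp [IsSymm, transpose_mul, hE.eq, Matrix.mul_assoc]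
  have hPfix : ∀ x ∈ ker F.mulVecLin, P *ᵥ x = x := by
    rintro _ hx
    obtain ⟨y, rfl⟩ := hPrange ▸ hx
    simp [mulVec_mulVec, hPidem]
  obtain ⟨Wp, hWp, hWp_rank⟩ := hPEP_herm.exists_posDefOn_finrank_eq_posIdx
  obtain ⟨Wm, hWm, hWm_rank⟩ := hPEP_herm.exists_nonposOn_posIdx_add_finrank_eq
  rw [← hPEP] at hWp
  obtain ⟨ε, hε, hlow⟩ :=
    exists_posDefOn_add_smul_add_smul hG hWp.map (hPrange ▸ LinearMap.map_le_range)
  refine ⟨ε, hε, fun δ hεδ hδ => ?_⟩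
  have hEV₀ : E.NonposOn (Wm ⊓ ker F.mulVecLin) := fun x hx => by
    simpa [← hPEP, ← mulVec_dotProduct_mulVec_mulVec, hPfix x hx.2] using hWm x hx.1
  obtain ⟨Z, hZ⟩ := (ker F.mulVecLin).exists_isCompl
  obtain ⟨lamδ, hlamδ, hup⟩ :=
    exists_nonposOn_add_smul_add_smul hE hF hG hker inf_le_right hEV₀ hZ.symm.disjoint hδ
  refine ⟨lamδ, hlamδ, fun lam hlam => ?_⟩
  have hA : (E + lam • F + δ • G).IsHermitian :=
    ((isHermitian_iff_isSymm.2 hE).add (hF.1.smul (.all lam))).add (hG.1.smul (.all δ))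
  refine le_antisymm ?_ ?_
  · have hupper := hA.posIdx_add_finrank_le (hup lam hlam)
    have hdim := Submodule.finrank_le_finrank_inf_sup_of_isCompl hZ Wm
    omega
  · calc posIdx (P * E * P) = finrank ℝ (Wp.map P.mulVecLin) := by
          rw [hWp.finrank_map, hWp_rank]
      _ ≤ _ := hA.finrank_le_posIdx (hlow δ hεδ lam)

/-- If `E, F, G` are symmetric, `F ≠ 0`, `F ⪰ 0`, `G ⪰ 0`, `ker G ⊆ ker F ∩ ker E`, and `P`
is the orthogonal projection onto `ker F`, then there is `ε < 0` such that for every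
`δ ∈ [ε, 0)` there is `λ_δ < 0` with `μ₊(E + λ F + δ G) = μ₊(P E P)` for all `λ ≤ λ_δ`. -/
theorem posIdx_perturbation {n : ℕ} (E F G P : Matrix (Fin n) (Fin n) ℝ)
    (hE : E.IsSymm) (hFne : F ≠ 0) (hF : F.PosSemidef) (hG : G.PosSemidef)
    (hker : LinearMap.ker G.mulVecLin ≤
      LinearMap.ker F.mulVecLin ⊓ LinearMap.ker E.mulVecLin)
    (hPsymm : P.IsSymm) (hPidem : P * P = P)
    (hPrange : LinearMap.range P.mulVecLin = LinearMap.ker F.mulVecLin) :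
    ∃ ε : ℝ, ε < 0 ∧ ∀ δ : ℝ, ε ≤ δ → δ < 0 →
      ∃ lamδ : ℝ, lamδ < 0 ∧ ∀ lam : ℝ, lam ≤ lamδ →
        posIdx (E + lam • F + δ • G) = posIdx (P * E * P) :=
  posIdx_perturbation_general E F G P hE hF hG hker hPsymm hPidem hPrange
end

section
/- Let F : ℝ → S_m (m×m real symmetric matrices) be a matrix polynomial in one real variable t, written in block form F(t) = [[Q(t), g(t)],[g(t)ᵀ, f(t)]] with Q(t) ∈ S_{m-1}, g(t) ∈ ℝ^{m-1}, f(t) ∈ ℝ. Suppose g and f vanish to second order at 0 (g(t) = t²β(t), f(t) = t²γ(t) for polynomials β, γ), Q(0) ≻ 0, and F(t) is not positive definite for all t in some interval (0, ε). Then γ(0) ≤ 0, i.e., f''(0) ≤ 0. -/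
/-!
Conjugating `F(t)` by `diag(1, …, 1, t)` shows that, for `t ≠ 0`, `F(t)` is positive definite
iff `G(t) = [[Q(t), t β(t)], [t β(t)ᵀ, γ(t)]]` is. Now `G` is continuous with
`G(0) = diag(Q(0), γ(0))`, which is positive definite if `γ(0) > 0`; since positive definiteness
is an open condition, `G(t)`, hence `F(t)`, would then be positive definite for all small `t > 0`.
-/

open Matrix Filter Topology

section

variable {m n R : Type*} [Fintype m] [Fintype n]

namespace Matrix

theorem posDef_fromBlocks_smul_iff [DecidableEq m] [DecidableEq n] [CommRing R] [PartialOrder R]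
    [StarRing R] [TrivialStar R] {t : R} (ht : IsUnit t) (A : Matrix m m R) (B : Matrix m n R)
    (C : Matrix n m R) (D : Matrix n n R) :
    (fromBlocks A (t • B) (t • C) (t ^ 2 • D)).PosDef ↔ (fromBlocks A B C D).PosDef := by
  have hU : IsUnit (diagonal (Sum.elim (fun _ : m => (1 : R)) fun _ : n => t)) := by
    rw [isUnit_diagonal, Pi.isUnit_iff]
    rintro (i | i) <;> simp [ht]
  convert hU.posDef_star_left_conjugate_iff using 2
  ext (i | i) (j | j) <;> simp [star_eq_conjTranspose, diagonal_mul, mul_diagonal] <;> ring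

theorem PosDef.fromBlocks_zero [CommRing R] [PartialOrder R] [StarRing R] [IsOrderedAddMonoid R]
    {A : Matrix m m R} {D : Matrix n n R} (hA : A.PosDef) (hD : D.PosDef) :
    (fromBlocks A 0 0 D).PosDef := by
  refine .of_dotProduct_mulVec_pos (hA.isHermitian.fromBlocks (by simp) hD.isHermitian) ?_
  intro x hx
  obtain ⟨y, z, rfl⟩ : ∃ y z, x = Sum.elim y z := ⟨_, _, (Sum.elim_comp_inl_inr x).symm⟩
  rw [fromBlocks_mulVec, Function.star_sumElim, sumElim_dotProduct_sumElim]
  simp only [Sum.elim_comp_inl, Sum.elim_comp_inr, zero_mulVec, add_zero, zero_add]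
  rcases eq_or_ne y 0 with rfl | hy
  · have hz : z ≠ 0 := by rintro rfl; exact hx Sum.elim_zero_zero
    simpa using hD.dotProduct_mulVec_pos hz
  · exact add_pos_of_pos_of_nonneg (hA.dotProduct_mulVec_pos hy)
      ((posSemidef_iff_dotProduct_mulVec.mp hD.posSemidef).2 z)

end Matrix

/-- Uniform positivity on the (compact) unit sphere propagates from `A x₀` to nearby `A x`. -/
theorem ContinuousAt.eventually_posDef {X : Type*} [TopologicalSpace X] {A : X → Matrix n n ℝ}
    {x₀ : X} (hA : ContinuousAt A x₀) (h₀ : (A x₀).PosDef)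
    (hsymm : ∀ᶠ x in 𝓝 x₀, (A x).IsHermitian) : ∀ᶠ x in 𝓝 x₀, (A x).PosDef := by
  have hquad : Continuous fun p : Matrix n n ℝ × (n → ℝ) => p.2 ⬝ᵥ (p.1 *ᵥ p.2) :=
    continuous_snd.dotProduct (continuous_fst.matrix_mulVec continuous_snd)
  have hsphere : ∀ᶠ x in 𝓝 x₀, ∀ v ∈ Metric.sphere (0 : n → ℝ) 1, 0 < v ⬝ᵥ (A x *ᵥ v) := by
    refine (isCompact_sphere 0 1).eventually_forall_of_forall_eventually fun v hv => ?_
    have hv0 : v ≠ 0 := ne_zero_of_mem_unit_sphere ⟨v, hv⟩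
    have hcont : ContinuousAt (fun p : X × (n → ℝ) => p.2 ⬝ᵥ (A p.1 *ᵥ p.2)) (x₀, v) :=
      hquad.continuousAt.comp (f := fun p : X × (n → ℝ) => (A p.1, p.2))
        ((hA.comp continuousAt_fst).prodMk continuousAt_snd)
    exact hcont.eventually (lt_mem_nhds (by simpa using h₀.dotProduct_mulVec_pos hv0))
  filter_upwards [hsphere, hsymm] with x hx hxs
  refine .of_dotProduct_mulVec_pos hxs fun w hw => ?_
  have hw' : 0 < ‖w‖ := norm_pos_iff.mpr hw
  have hunit := hx (‖w‖⁻¹ • w) (by simp [norm_smul, hw'.ne'])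
  rw [mulVec_smul, dotProduct_smul, smul_dotProduct, smul_smul, smul_eq_mul] at hunit
  simpa using pos_of_mul_pos_right hunit (by positivity)

end

/-- Let `F(t) = [[Q(t), g(t)],[g(t)ᵀ, f(t)]]` be a symmetric matrix polynomial in a real
variable `t` with polynomial entries, where `g(t) = t² β(t)` and `f(t) = t² γ(t)` vanish
to second order at `0`.  If `Q(0) ≻ 0` and `F(t)` is not positive definite for all
`t ∈ (0, ε)`, then `γ(0) ≤ 0` (equivalently `f''(0) ≤ 0`). -/
theorem schur_complement_second_order {m : ℕ}
    (Qp : Matrix (Fin m) (Fin m) (Polynomial ℝ))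
    (βp : Fin m → Polynomial ℝ) (γp : Polynomial ℝ)
    (Q : ℝ → Matrix (Fin m) (Fin m) ℝ)
    (hQ : ∀ t, Q t = Matrix.of fun i j => (Qp i j).eval t)
    (hQ0 : (Q 0).PosDef)
    (F : ℝ → Matrix (Fin m ⊕ Unit) (Fin m ⊕ Unit) ℝ)
    (hF : ∀ t, F t = Matrix.fromBlocks (Q t)
        (Matrix.of fun i _ => t ^ 2 * (βp i).eval t)
        (Matrix.of fun _ j => t ^ 2 * (βp j).eval t)
        (Matrix.of fun _ _ => t ^ 2 * γp.eval t))
    (hFsym : ∀ t, (F t).IsSymm)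
    (ε : ℝ) (hε : 0 < ε)
    (hnpd : ∀ t ∈ Set.Ioo 0 ε, ¬ (F t).PosDef) :
    γp.eval 0 ≤ 0 := by
  by_contra! hγ
  set B : ℝ → Matrix (Fin m) Unit ℝ := fun t => of fun i _ => t * (βp i).eval t
  set G : ℝ → Matrix (Fin m ⊕ Unit) (Fin m ⊕ Unit) ℝ :=
    fun t => fromBlocks (Q t) (B t) (B t)ᵀ (of fun _ _ => γp.eval t)
  have hF_eq (t : ℝ) :
      F t = fromBlocks (Q t) (t • B t) (t • (B t)ᵀ) (t ^ 2 • of fun _ _ => γp.eval t) := by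
    rw [hF]
    congr 1 <;> ext <;> simp [B] <;> ring
  have hG_cont : Continuous G := by
    have hQ_cont : Continuous Q := by
      rw [funext hQ]
      fun_prop
    fun_prop
  have hG_symm (t : ℝ) : (G t).IsHermitian := by
    have hQt := (isSymm_fromBlocks_iff.mp (hF t ▸ hFsym t)).1
    exact isHermitian_iff_isSymm.mpr (hQt.fromBlocks rfl (by ext; rfl))
  have hG0 : (G 0).PosDef := by
    have hγ0 : (of fun _ _ => γp.eval 0 : Matrix Unit Unit ℝ).PosDef := by
      rw [show (of fun _ _ => γp.eval 0 : Matrix Unit Unit ℝ) = diagonal fun _ => γp.eval 0 by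
        ext; simp]
      exact posDef_diagonal_iff.mpr fun _ => hγ
    convert hQ0.fromBlocks_zero hγ0 <;> ext <;> simp [B]
  obtain ⟨t, hGt, ht0, htε⟩ := ((hG_cont.continuousAt.eventually_posDef hG0
    (.of_forall hG_symm)).filter_mono nhdsWithin_le_nhds |>.and (Ioo_mem_nhdsGT hε)).exists
  refine hnpd t ⟨ht0, htε⟩ ?_
  rwa [hF_eq, posDef_fromBlocks_smul_iff (Ne.isUnit ht0.ne')]
end

section
/- Let r be a polynomial in g̃ noncommuting variables of degree at most d̃ with real coefficients, and let N ≥ Σ_{j=0}^{d̃} g̃^j. If r(A) = 0 for every tuple A = (A₁,…,A_{g̃}) of N×N real symmetric matrices, then r = 0. -/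
open Matrix

/-- Base-`g` style encoding of words: injective, and words of length ≤ d land below
`∑_{j≤d} g^j`. -/
private def enc {g : ℕ} : List (Fin g) → ℕ
  | [] => 0
  | a :: w => 1 + (a : ℕ) + g * enc w

private lemma enc_nil {g : ℕ} : enc ([] : List (Fin g)) = 0 := rfl

private lemma enc_cons {g : ℕ} (a : Fin g) (w : List (Fin g)) :
    enc (a :: w) = 1 + (a : ℕ) + g * enc w := rfl

private lemma encdiv {g a b m n : ℕ} (ha : a < g) (hb : b < g)
    (h : a + g * m = b + g * n) : a = b ∧ m = n := by
  have hg : 0 < g := lt_of_le_of_lt (Nat.zero_le a) ha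
  constructor
  · have h2 := congrArg (· % g) h
    simpa [Nat.add_mul_mod_self_left, Nat.mod_eq_of_lt ha, Nat.mod_eq_of_lt hb] using h2
  · have h2 := congrArg (· / g) h
    simpa [Nat.add_mul_div_left _ _ hg, Nat.div_eq_of_lt ha, Nat.div_eq_of_lt hb] using h2

private lemma enc_injective {g : ℕ} : ∀ v w : List (Fin g), enc v = enc w → v = w
  | [], [], _ => rfl
  | [], b :: w, h => by
      exfalso
      rw [enc_nil, enc_cons] at h
      have : 0 < 1 + (b : ℕ) + g * enc w := by positivity
      exact this.ne' h.symm
  | a :: v, [], h => by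
      exfalso
      rw [enc_nil, enc_cons] at h
      have : 0 < 1 + (a : ℕ) + g * enc v := by positivity
      exact this.ne' h
  | a :: v, b :: w, h => by
      rw [enc_cons, enc_cons, Nat.add_assoc, Nat.add_assoc] at h
      have h' := Nat.add_left_cancel h
      obtain ⟨h1, h2⟩ := encdiv a.isLt b.isLt h'
      rw [Fin.ext h1, enc_injective v w h2]

private lemma enc_lt {g : ℕ} (w : List (Fin g)) : ∀ d : ℕ, w.length ≤ d →
    enc w < ∑ j ∈ Finset.range (d + 1), g ^ j := by
  induction w with
  | nil =>
    intro d _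
    rw [enc_nil]
    have h1 : g ^ 0 ≤ ∑ j ∈ Finset.range (d + 1), g ^ j :=
      Finset.single_le_sum (fun i _ => Nat.zero_le (g ^ i))
        (Finset.mem_range.mpr (Nat.succ_pos d))
    rw [pow_zero] at h1
    exact lt_of_lt_of_le Nat.one_pos h1
  | cons a v ih =>
    intro d hd
    cases d with
    | zero => simp at hd
    | succ d =>
      have hIH := ih d (by simpa using hd)
      have hS : ∑ j ∈ Finset.range (d + 1 + 1), g ^ j
          = 1 + g * ∑ j ∈ Finset.range (d + 1), g ^ j := by
        rw [Finset.sum_range_succ']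
        simp only [pow_succ, pow_zero, ← Finset.sum_mul]
        ring
      rw [enc_cons, hS]
      have h1 : (a : ℕ) + g * enc v < g * ∑ j ∈ Finset.range (d + 1), g ^ j := by
        calc (a : ℕ) + g * enc v < g + g * enc v := Nat.add_lt_add_right a.isLt _
          _ = g * (enc v + 1) := by ring
          _ ≤ g * ∑ j ∈ Finset.range (d + 1), g ^ j :=
              Nat.mul_le_mul_left g (Nat.succ_le_of_lt hIH)
      rw [Nat.add_assoc]
      exact Nat.add_lt_add_left h1 1

open Classical in
/-- The "prepend letter `i`" shift matrix on the basis of (codes of) words of length < dt. -/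
private noncomputable def Smat (gt dt N : ℕ) (κ : List (Fin gt) → Fin N) (i : Fin gt) :
    Matrix (Fin N) (Fin N) ℝ :=
  Matrix.of fun x y =>
    if ∃ w : List (Fin gt), w.length < dt ∧ x = κ (i :: w) ∧ y = κ w then (1 : ℝ) else 0

private lemma SmulA {gt dt N : ℕ} {κ : List (Fin gt) → Fin N}
    (hκ : ∀ v w : List (Fin gt), v.length ≤ dt → w.length ≤ dt → κ v = κ w → v = w)
    (i j : Fin gt) (u : List (Fin gt)) (hu : (j :: u).length ≤ dt)
    (M : Matrix (Fin N) (Fin N) ℝ) (z : Fin N) :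
    (Smat gt dt N κ i * M) (κ (j :: u)) z = if j = i then M (κ u) z else 0 := by
  classical
  rw [Matrix.mul_apply]
  have hu' : u.length < dt := by simpa using hu
  by_cases hji : j = i
  · subst hji
    have h0 : ∀ b ∈ Finset.univ, b ≠ κ u →
        Smat gt dt N κ j (κ (j :: u)) b * M b z = 0 := by
      intro b _ hb
      simp only [Smat, Matrix.of_apply]
      rw [if_neg, zero_mul]
      rintro ⟨w, hw, h1, h2⟩
      have h3 : (j :: u) = (j :: w) :=
        hκ _ _ hu (by simpa using Nat.succ_le_of_lt hw) h1
      injection h3 with _ h4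
      exact hb (by rw [h2, ← h4])
    rw [Finset.sum_eq_single (κ u) h0 (fun h => absurd (Finset.mem_univ _) h),
      if_pos rfl]
    simp only [Smat, Matrix.of_apply]
    rw [if_pos ⟨u, hu', rfl, rfl⟩, one_mul]
  · rw [if_neg hji]
    apply Finset.sum_eq_zero
    intro b _
    simp only [Smat, Matrix.of_apply]
    rw [if_neg, zero_mul]
    rintro ⟨w, hw, h1, h2⟩
    have h3 := hκ _ _ hu (by simpa using Nat.succ_le_of_lt hw) h1
    injection h3 with h4 _
    exact hji h4

private lemma SmulB {gt dt N : ℕ} {κ : List (Fin gt) → Fin N}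
    (hκ : ∀ v w : List (Fin gt), v.length ≤ dt → w.length ≤ dt → κ v = κ w → v = w)
    (i : Fin gt) (u : List (Fin gt)) (hu : u.length ≤ dt)
    (M : Matrix (Fin N) (Fin N) ℝ) (z : Fin N) :
    ((Smat gt dt N κ i)ᵀ * M) (κ u) z = if u.length < dt then M (κ (i :: u)) z else 0 := by
  classical
  rw [Matrix.mul_apply]
  by_cases hlt : u.length < dt
  · rw [if_pos hlt]
    have h0 : ∀ b ∈ Finset.univ, b ≠ κ (i :: u) →
        (Smat gt dt N κ i)ᵀ (κ u) b * M b z = 0 := by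
      intro b _ hb
      simp only [Matrix.transpose_apply, Smat, Matrix.of_apply]
      rw [if_neg, zero_mul]
      rintro ⟨w, hw, h1, h2⟩
      have h3 : u = w := hκ _ _ hu (le_of_lt hw) h2
      exact hb (by rw [h1, ← h3])
    rw [Finset.sum_eq_single (κ (i :: u)) h0 (fun h => absurd (Finset.mem_univ _) h)]
    simp only [Matrix.transpose_apply, Smat, Matrix.of_apply]
    rw [if_pos ⟨u, hlt, rfl, rfl⟩, one_mul]
  · rw [if_neg hlt]
    apply Finset.sum_eq_zero
    intro b _
    simp only [Matrix.transpose_apply, Smat, Matrix.of_apply]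
    rw [if_neg, zero_mul]
    rintro ⟨w, hw, h1, h2⟩
    exact hlt (by rw [hκ _ _ hu (le_of_lt hw) h2]; exact hw)

private lemma key {gt dt N : ℕ} {κ : List (Fin gt) → Fin N}
    (hκ : ∀ v w : List (Fin gt), v.length ≤ dt → w.length ≤ dt → κ v = κ w → v = w) :
    ∀ v : List (Fin gt), v.length ≤ dt → ∀ u : List (Fin gt), u.length ≤ dt →
      v.length ≤ u.length →
      ((v.map fun i => Smat gt dt N κ i + (Smat gt dt N κ i)ᵀ).prod) (κ u) (κ []) =
        if u = v then 1 else 0 := by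
  classical
  intro v
  induction v with
  | nil =>
    intro _ u hu _
    rw [List.map_nil, List.prod_nil, Matrix.one_apply]
    by_cases h0 : u = []
    · subst h0; simp
    · rw [if_neg (fun h => h0 (hκ _ _ hu (by simp) h)), if_neg h0]
  | cons i v ih =>
    intro hv u hu hle
    cases u with
    | nil => simp at hle
    | cons j u' =>
      have hv' : v.length ≤ dt := le_trans (Nat.le_succ _) hv
      have huu' : u'.length ≤ dt := le_trans (Nat.le_succ _) hu
      rw [List.map_cons, List.prod_cons, Matrix.add_mul, Matrix.add_apply,
        SmulA hκ i j u' hu, SmulB hκ i (j :: u') hu]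
      have hzero : (if (j :: u').length < dt then
          ((v.map fun i => Smat gt dt N κ i + (Smat gt dt N κ i)ᵀ).prod)
            (κ (i :: j :: u')) (κ []) else 0) = 0 := by
        split_ifs with h
        · rw [ih hv' (i :: j :: u') (Nat.succ_le_of_lt h)
            (by simp only [List.length_cons] at hle ⊢; omega)]
          rw [if_neg]
          intro hEq
          have hl := congrArg List.length hEq
          simp only [List.length_cons] at hl hle
          omega
        · rfl
      rw [hzero, add_zero]
      have hlev : v.length ≤ u'.length := by
        simp only [List.length_cons] at hle; omega
      by_cases hj : j = i
      · subst hj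
        rw [if_pos rfl, ih hv' u' huu' hlev]
        by_cases h2 : u' = v
        · subst h2; simp
        · rw [if_neg h2, if_neg (by simp [h2])]
      · rw [if_neg hj, if_neg (by intro h; injection h with h1 _; exact hj h1)]

/-- A free polynomial `r = ∑_w c_w w` in `g̃` noncommuting variables of degree at most
`d̃` (represented by its finitely supported coefficient function on words) that vanishes
at every `g̃`-tuple of `N × N` real symmetric matrices, where `N ≥ ∑_{j=0}^{d̃} g̃^j`,
is the zero polynomial. -/
theorem free_poly_faithful {gt dt N : ℕ}
    (hN : (∑ j ∈ Finset.range (dt + 1), gt ^ j) ≤ N)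
    (c : (List (Fin gt)) →₀ ℝ)
    (hdeg : ∀ w ∈ c.support, w.length ≤ dt)
    (hvan : ∀ A : Fin gt → Matrix (Fin N) (Fin N) ℝ, (∀ i, (A i).IsSymm) →
      (c.sum fun w coeff => coeff • (w.map A).prod) = 0) :
    c = 0 := by
  classical
  have hpos : 0 < N := by
    have h1 : gt ^ 0 ≤ ∑ j ∈ Finset.range (dt + 1), gt ^ j :=
      Finset.single_le_sum (fun i _ => Nat.zero_le (gt ^ i))
        (Finset.mem_range.mpr (Nat.succ_pos dt))
    rw [pow_zero] at h1
    exact lt_of_lt_of_le (lt_of_lt_of_le Nat.one_pos h1) hN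
  set κ : List (Fin gt) → Fin N := fun w => ⟨enc w % N, Nat.mod_lt _ hpos⟩ with hκdef
  have hκval : ∀ w : List (Fin gt), w.length ≤ dt → ((κ w : Fin N) : ℕ) = enc w := by
    intro w hw
    exact Nat.mod_eq_of_lt (lt_of_lt_of_le (enc_lt w dt hw) hN)
  have hκ : ∀ v w : List (Fin gt), v.length ≤ dt → w.length ≤ dt → κ v = κ w → v = w := by
    intro v w hv hw h
    apply enc_injective
    have h2 := congrArg Fin.val h
    rwa [hκval v hv, hκval w hw] at h2
  set A : Fin gt → Matrix (Fin N) (Fin N) ℝ :=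
    fun i => Smat gt dt N κ i + (Smat gt dt N κ i)ᵀ with hA
  have hsym : ∀ i, (A i).IsSymm := by
    intro i
    simp [hA, Matrix.IsSymm, Matrix.transpose_add, Matrix.transpose_transpose, add_comm]
  have hz := hvan A hsym
  by_contra hc
  obtain ⟨w0, hw0, hmax⟩ := Finset.exists_max_image c.support List.length
    (Finsupp.support_nonempty_iff.mpr hc)
  have h0 : (c.sum fun w coeff => coeff • (w.map A).prod) (κ w0) (κ []) = 0 := by
    rw [hz]; rfl
  rw [Finsupp.sum, Matrix.sum_apply] at h0
  have hrw : ∀ w ∈ c.support,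
      (c w • (w.map A).prod) (κ w0) (κ []) = if w0 = w then c w else 0 := by
    intro w hw
    rw [Matrix.smul_apply, hA, key hκ w (hdeg w hw) w0 (hdeg w0 hw0) (hmax w hw),
      smul_eq_mul]
    split_ifs <;> simp
  rw [Finset.sum_congr rfl hrw, Finset.sum_ite_eq, if_pos hw0] at h0
  exact (Finsupp.mem_support_iff.mp hw0) h0
end

section
/- Let r be a free polynomial of degree at most d̃ in g̃ noncommuting variables and N ≥ Σ_{j=0}^{d̃} g̃^j. If r vanishes on a nonempty open subset U of the space of g̃-tuples of N×N real symmetric matrices, then r vanishes on all of S_N(ℝ^{g̃}) and hence r = 0. -/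
open Matrix Polynomial
namespace FPV

variable {gt dt N : ℕ}

def enc (gt : ℕ) : List (Fin gt) → ℕ
  | [] => 0
  | i :: w => 1 + i + gt * enc gt w

lemma enc_lt (w : List (Fin gt)) :
    enc gt w < ∑ j ∈ Finset.range (w.length + 1), gt ^ j := by
  induction w with
  | nil => simp [enc]
  | cons i w ih =>
    have hi : (i : ℕ) + 1 ≤ gt := i.isLt
    have h2 : gt * (enc gt w + 1) ≤ gt * ∑ j ∈ Finset.range (w.length + 1), gt ^ j :=
      Nat.mul_le_mul_left _ ih
    have h3 : ∑ j ∈ Finset.range (w.length + 1 + 1), gt ^ j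
        = gt * ∑ j ∈ Finset.range (w.length + 1), gt ^ j + 1 := geom_sum_succ
    show 1 + (i:ℕ) + gt * enc gt w < ∑ j ∈ Finset.range (w.length + 1 + 1), gt ^ j
    rw [h3]
    nlinarith [h2, hi]

lemma enc_lt_N (hN : (∑ j ∈ Finset.range (dt + 1), gt ^ j) ≤ N)
    (w : List (Fin gt)) (hw : w.length ≤ dt) : enc gt w < N := by
  have h1 := enc_lt w
  have h2 : ∑ j ∈ Finset.range (w.length + 1), gt ^ j ≤ ∑ j ∈ Finset.range (dt + 1), gt ^ j :=
    Finset.sum_le_sum_of_subset (Finset.range_subset_range.2 (by omega))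
  omega

lemma enc_injective : Function.Injective (enc gt) := by
  intro v
  induction v with
  | nil =>
    intro w h
    cases w with
    | nil => rfl
    | cons j w =>
      exfalso
      have h2 : 0 < 1 + (j:ℕ) + gt * enc gt w :=
        Nat.lt_of_lt_of_le (by omega) (Nat.le_add_right _ _)
      exact absurd h (Nat.ne_of_lt h2)
  | cons i v ih =>
    intro w h
    cases w with
    | nil => simp [enc] at h
    | cons j w =>
      simp only [enc] at h
      have hgt : 0 < gt := i.pos
      have h' : (i:ℕ) + gt * enc gt v = (j:ℕ) + gt * enc gt w := by omega
      have hi : (i:ℕ) = j := by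
        have := congrArg (· % gt) h'
        simpa [Nat.add_mul_mod_self_left, Nat.mod_eq_of_lt i.isLt, Nat.mod_eq_of_lt j.isLt]
          using this
      have he : enc gt v = enc gt w := by
        have : gt * enc gt v = gt * enc gt w := by omega
        exact Nat.eq_of_mul_eq_mul_left hgt this
      rw [ih he]
      congr 1
      exact Fin.ext hi

def dec (gt : ℕ) : ℕ → List (Fin gt)
  | 0 => []
  | (n+1) =>
    if h : 0 < gt then ⟨n % gt, Nat.mod_lt n h⟩ :: dec gt (n / gt) else []
  decreasing_by exact Nat.lt_succ_of_le (Nat.div_le_self _ _)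

lemma dec_enc (w : List (Fin gt)) : dec gt (enc gt w) = w := by
  induction w with
  | nil => simp only [enc, dec]
  | cons i w ih =>
    have hgt : 0 < gt := i.pos
    have h1 : enc gt (i :: w) = ((i:ℕ) + gt * enc gt w) + 1 := by simp [enc]; omega
    rw [h1]
    rw [dec]
    rw [dif_pos hgt]
    congr 1
    · apply Fin.ext
      simp [Nat.add_mul_mod_self_left, Nat.mod_eq_of_lt i.isLt]
    · rw [Nat.add_mul_div_left _ _ hgt, Nat.div_eq_of_lt i.isLt, zero_add, ih]


noncomputable def Sm (gt dt N : ℕ) (i : Fin gt) : Matrix (Fin N) (Fin N) ℝ :=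
  Matrix.of fun a b =>
    if (dec gt (b : ℕ)).length < dt ∧ (a : ℕ) = enc gt (i :: dec gt (b : ℕ))
        ∧ (b : ℕ) = enc gt (dec gt (b : ℕ)) then 1 else 0

noncomputable def Xm (gt dt N : ℕ) (i : Fin gt) : Matrix (Fin N) (Fin N) ℝ :=
  Sm gt dt N i + (Sm gt dt N i)ᵀ

lemma Xm_isSymm (i : Fin gt) : (Xm gt dt N i).IsSymm := by
  simp [Xm, Matrix.IsSymm, Matrix.transpose_add, add_comm]

lemma Xm_row (hN : (∑ j ∈ Finset.range (dt + 1), gt ^ j) ≤ N)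
    (i j : Fin gt) (v : List (Fin gt)) (hv : (j :: v).length ≤ dt) (k : Fin N) :
    Xm gt dt N i ⟨enc gt (j :: v), enc_lt_N hN _ hv⟩ k
      = (if i = j ∧ (k : ℕ) = enc gt v then 1 else 0)
        + (if (j :: v).length < dt ∧ (k : ℕ) = enc gt (i :: j :: v) then 1 else 0) := by
  have hvd : v.length < dt := by simp at hv; omega
  simp only [Xm, Matrix.add_apply, Matrix.transpose_apply, Sm, Matrix.of_apply]
  congr 1
  · refine if_congr ?_ rfl rfl
    constructor
    · rintro ⟨h1, h2, h3⟩
      have heq : j :: v = i :: dec gt (k:ℕ) := enc_injective h2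
      injection heq with hji hvk
      exact ⟨hji.symm, by rw [h3, ← hvk]⟩
    · rintro ⟨h1, h2⟩
      have hdk : dec gt (k:ℕ) = v := by rw [h2, dec_enc]
      refine ⟨by rw [hdk]; exact hvd, ?_, ?_⟩
      · rw [hdk, h1]
      · rw [hdk, h2]
  · refine if_congr ?_ rfl rfl
    rw [dec_enc]
    constructor
    · rintro ⟨h1, h2, _⟩; exact ⟨by simpa using h1, h2⟩
    · rintro ⟨h1, h2⟩; exact ⟨by simpa using h1, h2, rfl⟩

lemma prod_entry (hN : (∑ j ∈ Finset.range (dt + 1), gt ^ j) ≤ N) :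
    ∀ (w v u : List (Fin gt)), ∀ (hwu : w.length + u.length ≤ dt) (hv : v.length ≤ dt)
      (hu : u.length ≤ dt), w.length + u.length ≤ v.length →
    ((w.map (Xm gt dt N)).prod) ⟨enc gt v, enc_lt_N hN _ hv⟩ ⟨enc gt u, enc_lt_N hN _ hu⟩
      = if v = w ++ u then 1 else 0 := by
  intro w
  induction w with
  | nil =>
    intro v u hwu hv hu hlen
    simp only [List.map_nil, List.prod_nil, Matrix.one_apply, List.nil_append]
    refine if_congr ?_ rfl rfl
    rw [Fin.ext_iff]
    exact ⟨fun h => enc_injective h, fun h => congrArg (enc gt) h⟩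
  | cons i w' ih =>
    intro v u hwu hv hu hlen
    obtain ⟨j, v', rfl⟩ : ∃ j v', v = j :: v' := by
      cases v with
      | nil => simp at hlen
      | cons a b => exact ⟨a, b, rfl⟩
    simp only [List.map_cons, List.prod_cons, Matrix.mul_apply]
    have hv' : v'.length ≤ dt := by simp at hv; omega
    have hwu' : w'.length + u.length ≤ dt := by simp at hwu; omega
    rw [Finset.sum_congr rfl (fun k _ => by rw [Xm_row hN i j v' hv, add_mul])]
    rw [Finset.sum_add_distrib]
    have hS2 : (∑ k : Fin N,
        (if (j :: v').length < dt ∧ (k : ℕ) = enc gt (i :: j :: v') then (1:ℝ) else 0) *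
        ((w'.map (Xm gt dt N)).prod) k ⟨enc gt u, enc_lt_N hN _ hu⟩) = 0 := by
      by_cases hlt : (j :: v').length < dt
      · have hlen2 : (i :: j :: v').length ≤ dt := by simp at hlt ⊢; omega
        have hcond : ∀ k : Fin N, ((j :: v').length < dt ∧ (k : ℕ) = enc gt (i :: j :: v'))
            ↔ k = ⟨enc gt (i :: j :: v'), enc_lt_N hN _ hlen2⟩ := by
          intro k
          exact ⟨fun h => Fin.ext h.2, fun h => ⟨hlt, congrArg Fin.val h⟩⟩
        rw [Finset.sum_congr rfl (fun k _ => by rw [if_congr (hcond k) rfl rfl])]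
        simp only [ite_mul, one_mul, zero_mul]
        rw [Finset.sum_ite_eq']
        simp only [Finset.mem_univ, if_true]
        rw [ih (i :: j :: v') u hwu' hlen2 hu (by simp at hlen ⊢; omega)]
        refine if_neg ?_
        intro h
        have := congrArg List.length h
        simp at this hlen
        omega
      · have : ∀ k : Fin N,
            (if (j :: v').length < dt ∧ (k : ℕ) = enc gt (i :: j :: v') then (1:ℝ) else 0) = 0 :=
          fun k => if_neg (fun h => hlt h.1)
        rw [Finset.sum_congr rfl (fun k _ => by rw [this k, zero_mul])]
        exact Finset.sum_const_zero
    rw [hS2, add_zero]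
    by_cases hij : i = j
    · have hcond : ∀ k : Fin N, (i = j ∧ (k : ℕ) = enc gt v')
          ↔ k = ⟨enc gt v', enc_lt_N hN _ hv'⟩ := by
        intro k
        exact ⟨fun h => Fin.ext h.2, fun h => ⟨hij, congrArg Fin.val h⟩⟩
      rw [Finset.sum_congr rfl (fun k _ => by rw [if_congr (hcond k) rfl rfl])]
      simp only [ite_mul, one_mul, zero_mul]
      rw [Finset.sum_ite_eq']
      simp only [Finset.mem_univ, if_true]
      rw [ih v' u hwu' hv' hu (by simp at hlen ⊢; omega)]
      subst hij
      simp [List.cons_append]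
    · have : ∀ k : Fin N, (if i = j ∧ (k : ℕ) = enc gt v' then (1:ℝ) else 0) = 0 :=
        fun k => if_neg (fun h => hij h.1)
      rw [Finset.sum_congr rfl (fun k _ => by rw [this k, zero_mul])]
      rw [Finset.sum_const_zero]
      simp only [List.cons_append, List.cons.injEq]
      exact (if_neg (fun h => hij h.1.symm)).symm

lemma c_eq_zero (hN : (∑ j ∈ Finset.range (dt + 1), gt ^ j) ≤ N)
    (c : (List (Fin gt)) →₀ ℝ) (hdeg : ∀ w ∈ c.support, w.length ≤ dt)
    (hp : (c.sum fun w coeff => coeff • ((w.map (Xm gt dt N)).prod)) = 0) : c = 0 := by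
  have key : ∀ k : ℕ, ∀ v : List (Fin gt), dt + 1 - k ≤ v.length → c v = 0 := by
    intro k
    induction k with
    | zero =>
      intro v hlen
      by_contra hc
      have := hdeg v (Finsupp.mem_support_iff.2 hc)
      omega
    | succ k ih =>
      intro v hlen
      by_cases hbig : dt + 1 - k ≤ v.length
      · exact ih v hbig
      · have hvlen : v.length ≤ dt := by omega
        have hnil : ([] : List (Fin gt)).length ≤ dt := Nat.zero_le dt
        have h0 : (c.sum fun w coeff => coeff • ((w.map (Xm gt dt N)).prod))
            ⟨enc gt v, enc_lt_N hN _ hvlen⟩ ⟨enc gt [], enc_lt_N hN _ hnil⟩ = 0 := by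
          rw [hp]; rfl
        rw [Finsupp.sum] at h0
        rw [Matrix.sum_apply] at h0
        have hterm : ∀ w ∈ c.support,
            c w • ((w.map (Xm gt dt N)).prod)
              ⟨enc gt v, enc_lt_N hN _ hvlen⟩ ⟨enc gt [], enc_lt_N hN _ hnil⟩
            = if w = v then c v else 0 := by
          intro w hw
          rw [smul_eq_mul]
          by_cases hlong : v.length < w.length
          · have hcw : c w = 0 := ih w (by omega)
            rw [hcw, zero_mul]
            rw [if_neg (fun h => by subst h; omega)]
          · have hwdt : w.length ≤ dt := hdeg w hw
            have := prod_entry hN w v [] (by simpa using hwdt) hvlen hnil (by simp; omega)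
            rw [this]
            by_cases hwv : w = v
            · subst hwv; simp
            · rw [if_neg (fun h => hwv (by simpa using h.symm)), mul_zero, if_neg hwv]
        rw [Finset.sum_congr rfl (fun w hw =>
          (Matrix.smul_apply (c w) _ _ _).trans (hterm w hw))] at h0
        rw [Finset.sum_ite_eq' c.support v (fun _ => c v)] at h0
        by_cases hv : v ∈ c.support
        · rwa [if_pos hv] at h0
        · exact Finsupp.notMem_support_iff.1 hv
  ext v
  exact key (dt + 1) v (by omega)

lemma vanish_all
    (c : (List (Fin gt)) →₀ ℝ)
    (U : Set {A : Fin gt → Matrix (Fin N) (Fin N) ℝ // ∀ i, (A i).IsSymm})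
    (hUopen : IsOpen U) (hUne : U.Nonempty)
    (hvan : ∀ A ∈ U, (c.sum fun w coeff => coeff • (w.map A.1).prod) = 0) :
    ∀ A : Fin gt → Matrix (Fin N) (Fin N) ℝ, (∀ i, (A i).IsSymm) →
      (c.sum fun w coeff => coeff • (w.map A).prod) = 0 := by
  obtain ⟨Y, hY⟩ := hUne
  intro A hA
  set D : Fin gt → Matrix (Fin N) (Fin N) ℝ := fun i => A i - Y.1 i with hD
  have hsymm : ∀ t : ℝ, ∀ i, (Y.1 i + t • D i).IsSymm := by
    intro t i
    have h1 := Y.2 i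
    have h2 := hA i
    simp only [Matrix.IsSymm] at h1 h2 ⊢
    rw [Matrix.transpose_add, Matrix.transpose_smul, hD, Matrix.transpose_sub, h1, h2]
  set g : ℝ → {A : Fin gt → Matrix (Fin N) (Fin N) ℝ // ∀ i, (A i).IsSymm} :=
    fun t => ⟨fun i => Y.1 i + t • D i, hsymm t⟩ with hg
  have hcont : Continuous g := by
    apply Continuous.subtype_mk
    apply continuous_pi
    intro i
    exact continuous_const.add (continuous_id.smul continuous_const)
  have hmem : g ⁻¹' U ∈ nhds (0 : ℝ) := by
    apply (hUopen.preimage hcont).mem_nhds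
    show g 0 ∈ U
    have hg0 : g 0 = Y := by
      apply Subtype.ext
      funext i
      simp [hg]
    rwa [hg0]
  have hinf : (g ⁻¹' U).Infinite := infinite_of_mem_nhds 0 hmem
  set B : Fin gt → Matrix (Fin N) (Fin N) ℝ[X] :=
    fun i => (Y.1 i).map C + (D i).map (fun r => C r * X) with hB
  set q : Matrix (Fin N) (Fin N) ℝ[X] := c.sum fun w coeff => coeff • (w.map B).prod with hq
  have hev : ∀ t : ℝ, q.map (eval t)
      = c.sum fun w coeff => coeff • ((w.map fun i => Y.1 i + t • D i).prod) := by
    intro t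
    set φ : Matrix (Fin N) (Fin N) ℝ[X] →+* Matrix (Fin N) (Fin N) ℝ :=
      (evalRingHom t).mapMatrix with hφ
    have hφapp : ∀ M : Matrix (Fin N) (Fin N) ℝ[X], φ M = M.map (eval t) := fun M => rfl
    have hBev : ∀ i, φ (B i) = Y.1 i + t • D i := by
      intro i
      refine Matrix.ext fun a b => ?_
      rw [hφapp]
      show ((((Y.1 i).map C + (D i).map (fun r => C r * X))).map (eval t)) a b = _
      simp only [Matrix.map_apply, Matrix.add_apply, Matrix.smul_apply, eval_add, eval_mul,
        eval_C, eval_X, smul_eq_mul]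
      ring
    calc q.map (eval t) = φ q := (hφapp q).symm
      _ = c.sum fun w coeff => φ (coeff • (w.map B).prod) := map_finsuppSum φ c _
      _ = c.sum fun w coeff => coeff • ((w.map fun i => Y.1 i + t • D i).prod) := by
          refine Finsupp.sum_congr fun w hw => ?_
          rw [hφapp, Matrix.map_smul (eval t) _ (fun p => by simp [Polynomial.eval_smul]) _]
          congr 1
          rw [← hφapp, map_list_prod φ, List.map_map]
          congr 1
          exact congrArg (fun f => List.map f w) (funext fun i => hBev i)
  have hq0 : q = 0 := by
    refine Matrix.ext fun a b => ?_
    have hroots : {x : ℝ | (q a b).IsRoot x}.Infinite := by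
      apply hinf.mono
      intro t ht
      have h1 := hvan (g t) ht
      have h2 : q.map (eval t) = 0 := by rw [hev t]; exact h1
      have h3 := congrFun (congrFun h2 a) b
      simpa [Matrix.map_apply] using h3
    have := Polynomial.eq_zero_of_infinite_isRoot _ hroots
    simpa using this
  have hfin := hev 1
  rw [hq0] at hfin
  have hz : (c.sum fun w coeff => coeff • ((w.map fun i => Y.1 i + (1:ℝ) • D i).prod)) = 0 := by
    rw [← hfin]
    refine Matrix.ext fun a b => ?_
    simp [Matrix.map_apply]
  have hAe : (fun i => Y.1 i + (1:ℝ) • D i) = A := by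
    funext i
    simp [hD]
  rwa [hAe] at hz

end FPV

/-- A free polynomial of degree at most `d̃` in `g̃` noncommuting variables
(represented by its finitely supported coefficient function on words) that vanishes on a
nonempty open subset of the space of `g̃`-tuples of `N × N` real symmetric matrices, with
`N ≥ ∑_{j=0}^{d̃} g̃^j`, vanishes on all of `S_N(ℝ^{g̃})` and hence is zero. -/
theorem free_poly_vanish_on_open {gt dt N : ℕ}
    (hN : (∑ j ∈ Finset.range (dt + 1), gt ^ j) ≤ N)
    (c : (List (Fin gt)) →₀ ℝ)
    (hdeg : ∀ w ∈ c.support, w.length ≤ dt)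
    (U : Set {A : Fin gt → Matrix (Fin N) (Fin N) ℝ // ∀ i, (A i).IsSymm})
    (hUopen : IsOpen U) (hUne : U.Nonempty)
    (hvan : ∀ A ∈ U, (c.sum fun w coeff => coeff • (w.map A.1).prod) = 0) :
    (∀ A : Fin gt → Matrix (Fin N) (Fin N) ℝ, (∀ i, (A i).IsSymm) →
      (c.sum fun w coeff => coeff • (w.map A).prod) = 0) ∧ c = 0 := by
  have h1 := FPV.vanish_all c U hUopen hUne hvan
  exact ⟨h1, FPV.c_eq_zero hN c hdeg (h1 (FPV.Xm gt dt N) (fun i => FPV.Xm_isSymm i))⟩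
end

section
/- Fix g̃ variables and degree bound d̃, and let N = Σ_{j=0}^{d̃} g̃^j. Let H be the N-dimensional real Hilbert space with orthonormal basis the words of length at most d̃ in letters a₁,…,a_{g̃}. Define shift operators S_j on H by S_j w = a_j w for words w of length ≤ d̃−1 and S_j w = 0 for words of length d̃, and set T_j = S_j + S_jᵀ. Then for every homogeneous free polynomial r = Σ_v r_v v of degree d̃, the vector r(T)·∅ equals Σ_v r_v v + h, where h is a linear combination of words of degree at most d̃−2; in particular if r(T) = 0 then r = 0. -/
/-- The Hilbert space of the truncated Fock-space construction: functions on the words of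
length at most `dt` in `gt` letters (the words form an orthonormal basis). -/
def TruncWords (gt dt : ℕ) := {w : List (Fin gt) // w.length ≤ dt}

/-- The creation (shift) operator `S_j`: on basis vectors, `S_j e_w = e_{a_j w}` for
`|w| ≤ dt - 1` and `S_j e_w = 0` for `|w| = dt`. -/
def shiftS {gt dt : ℕ} (j : Fin gt) (f : TruncWords gt dt → ℝ) :
    TruncWords gt dt → ℝ := fun w =>
  match w with
  | ⟨[], _⟩ => 0
  | ⟨i :: rest, h⟩ =>
      if i = j then f ⟨rest, Nat.le_of_succ_le h⟩ else 0

/-- The transpose (annihilation) operator `S_jᵀ`: on basis vectors, `S_jᵀ e_w` is the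
vector whose `u`-coefficient is the `(a_j u)`-coefficient of `e_w` (when `|a_j u| ≤ dt`). -/
def shiftSt {gt dt : ℕ} (j : Fin gt) (f : TruncWords gt dt → ℝ) :
    TruncWords gt dt → ℝ := fun w =>
  if h : w.1.length + 1 ≤ dt then f ⟨j :: w.1, by simpa using h⟩ else 0

/-- The symmetric operator `T_j = S_j + S_jᵀ`. -/
def shiftT {gt dt : ℕ} (j : Fin gt) (f : TruncWords gt dt → ℝ) :
    TruncWords gt dt → ℝ :=
  shiftS j f + shiftSt j f

/-- Evaluation of a word `w = a_{i₁} ⋯ a_{i_m}` at the tuple `T`, as the composition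
`T_{i₁} ∘ ⋯ ∘ T_{i_m}` of the operators `T_j`. -/
def wordT {gt dt : ℕ} (w : List (Fin gt)) :
    (TruncWords gt dt → ℝ) → (TruncWords gt dt → ℝ) :=
  w.foldr (fun j acc => shiftT j ∘ acc) id

/-- The empty-word basis vector `∅`. -/
noncomputable def emptyVec (gt dt : ℕ) : TruncWords gt dt → ℝ := fun w =>
  if w.1 = [] then 1 else 0

/-!
Write `e_w` for the basis vector of a word `w`. Since `S_j e_w = e_{a_j w}` while `S_jᵀ` lowers
the length of a word by one, induction on `w` shows `w(T) ∅ = e_w + h_w` with `h_w` supported on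
words of length at most `|w| - 2`: applying `T_j` adds one to the length bound of `h_w`, and the
new error `S_jᵀ e_w` has length `|w| - 1`. Summing over a homogeneous `r` of degree `d̃` gives
`r(T) ∅ = ∑_v r_v e_v + h`, and reading off the top-degree coefficients shows `r = 0` whenever
`r(T) = 0`.
-/

/-- For `dt < w.length` this is the zero vector, which is why `shiftS_basisVec` needs no length
hypothesis. -/
def basisVec {gt dt : ℕ} (w : List (Fin gt)) : TruncWords gt dt → ℝ := fun u =>
  if u.1 = w then 1 else 0

/-- Vectors supported on words of length at most `m - 2`, written without truncated
subtraction (so `lowDegree 0 = lowDegree 1 = ⊥`). -/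
def lowDegree (gt dt m : ℕ) : Submodule ℝ (TruncWords gt dt → ℝ) where
  carrier := {f | ∀ u, f u ≠ 0 → u.1.length + 2 ≤ m}
  add_mem' {f g} hf hg u hu := by
    by_cases hfu : f u = 0
    · exact hg u fun hgu => hu (by simp [hfu, hgu])
    · exact hf u hfu
  zero_mem' u hu := absurd rfl hu
  smul_mem' a f hf u hu := hf u (right_ne_zero_of_mul hu)

section

variable {gt dt : ℕ}

theorem apply_eq_zero_of_mem_lowDegree {m : ℕ} {f : TruncWords gt dt → ℝ}
    (hf : f ∈ lowDegree gt dt m) {u : TruncWords gt dt} (hu : m < u.1.length + 2) : f u = 0 :=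
  by_contra fun hne => absurd (hf u hne) (by omega)

theorem emptyVec_eq_basisVec : emptyVec gt dt = basisVec [] := rfl

theorem wordT_cons (j : Fin gt) (w : List (Fin gt)) (f : TruncWords gt dt → ℝ) :
    wordT (j :: w) f = shiftT j (wordT w f) := rfl

theorem shiftS_basisVec (j : Fin gt) (w : List (Fin gt)) :
    shiftS j (basisVec w : TruncWords gt dt → ℝ) = basisVec (j :: w) := by
  funext ⟨u, hu⟩
  cases u with
  | nil => simp [shiftS, basisVec]
  | cons i rest => by_cases hij : i = j <;> simp [shiftS, basisVec, hij]

theorem shiftS_sub (j : Fin gt) (f g : TruncWords gt dt → ℝ) :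
    shiftS j (f - g) = shiftS j f - shiftS j g := by
  funext ⟨u, hu⟩
  change shiftS j (f - g) ⟨u, hu⟩ = shiftS j f ⟨u, hu⟩ - shiftS j g ⟨u, hu⟩
  cases u with
  | nil => exact (sub_zero 0).symm
  | cons i rest =>
    simp only [shiftS]
    split_ifs
    exacts [rfl, (sub_zero 0).symm]

theorem shiftSt_sub (j : Fin gt) (f g : TruncWords gt dt → ℝ) :
    shiftSt j (f - g) = shiftSt j f - shiftSt j g := by
  funext u
  change shiftSt j (f - g) u = shiftSt j f u - shiftSt j g u
  simp only [shiftSt]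
  split_ifs
  exacts [rfl, (sub_zero 0).symm]

theorem shiftT_sub (j : Fin gt) (f g : TruncWords gt dt → ℝ) :
    shiftT j (f - g) = shiftT j f - shiftT j g := by
  unfold shiftT
  rw [shiftS_sub, shiftSt_sub]
  abel

theorem shiftSt_basisVec_mem (j : Fin gt) (w : List (Fin gt)) :
    shiftSt j (basisVec w) ∈ lowDegree gt dt (w.length + 1) := by
  intro u hu
  simp only [shiftSt, basisVec] at hu
  split_ifs at hu with _ huw
  · simp [← huw]
  all_goals exact absurd rfl hu

theorem shiftT_mem_lowDegree (j : Fin gt) {m : ℕ} {f : TruncWords gt dt → ℝ}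
    (hf : f ∈ lowDegree gt dt m) : shiftT j f ∈ lowDegree gt dt (m + 1) := by
  have hS : shiftS j f ∈ lowDegree gt dt (m + 1) := by
    rintro ⟨_ | ⟨i, rest⟩, hu⟩ h
    · simp [shiftS] at h
    · simp only [shiftS, ne_eq, ite_eq_right_iff, Classical.not_imp] at h
      have := hf _ h.2
      simp only [List.length_cons] at this ⊢
      omega
  have hSt : shiftSt j f ∈ lowDegree gt dt (m + 1) := by
    intro u h
    simp only [shiftSt, ne_eq, dite_eq_right_iff, not_forall] at h
    obtain ⟨_, h⟩ := h
    have := hf _ h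
    simp only [List.length_cons] at this
    omega
  exact add_mem hS hSt

theorem wordT_emptyVec_sub_basisVec_mem (w : List (Fin gt)) :
    wordT w (emptyVec gt dt) - basisVec w ∈ lowDegree gt dt w.length := by
  induction w with
  | nil => simp [wordT, emptyVec_eq_basisVec]
  | cons j w ih =>
    have hsplit : wordT (j :: w) (emptyVec gt dt) - basisVec (j :: w) =
        shiftT j (wordT w (emptyVec gt dt) - basisVec w) + shiftSt j (basisVec w) := by
      rw [wordT_cons, shiftT_sub, ← shiftS_basisVec j w]
      unfold shiftT
      abel
    rw [hsplit]
    exact add_mem (shiftT_mem_lowDegree j ih) (shiftSt_basisVec_mem j w)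

theorem finsuppSum_smul_basisVec (c : List (Fin gt) →₀ ℝ) :
    (c.sum fun w a => a • (basisVec w : TruncWords gt dt → ℝ)) = fun u => c u.1 := by
  funext u
  simp only [Finsupp.sum, Finset.sum_apply, Pi.smul_apply, basisVec, smul_eq_mul, mul_ite,
    mul_one, mul_zero]
  rw [Finset.sum_ite_eq]
  split_ifs with hu
  · rfl
  · exact (Finsupp.notMem_support_iff.mp hu).symm

end

/-- For a homogeneous free polynomial `r = ∑_v r_v v` of degree `dt` (coefficients `c`),
the vector `r(T) ∅` equals `∑_v r_v v + h` with `h` a combination of words of degree at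
most `dt − 2`; in particular, if the operator `r(T)` is zero then `r = 0`. -/
theorem truncated_shift_faithful {gt dt : ℕ}
    (c : (List (Fin gt)) →₀ ℝ)
    (hhom : ∀ w ∈ c.support, w.length = dt) :
    (∃ h : TruncWords gt dt → ℝ,
      (∀ u : TruncWords gt dt, h u ≠ 0 → u.1.length + 2 ≤ dt) ∧
      (c.sum fun w coeff => coeff • wordT w (emptyVec gt dt)) =
        (fun u => c u.1 + h u)) ∧
    ((∀ f : TruncWords gt dt → ℝ,
        (c.sum fun w coeff => coeff • wordT w f) = 0) → c = 0) := by
  set h : TruncWords gt dt → ℝ := c.sum fun w a => a • (wordT w (emptyVec gt dt) - basisVec w)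
  have hlow : h ∈ lowDegree gt dt dt := by
    refine Submodule.finsuppSum_mem _ _ _ _ fun w hw => Submodule.smul_mem _ _ ?_
    rw [← hhom w (Finsupp.mem_support_iff.mpr hw)]
    exact wordT_emptyVec_sub_basisVec_mem w
  have hsum : (c.sum fun w a => a • wordT w (emptyVec gt dt)) = fun u => c u.1 + h u := by
    simp only [h, smul_sub, Finsupp.sum_sub, finsuppSum_smul_basisVec]
    funext u
    simp
  refine ⟨⟨h, hlow, hsum⟩, fun hzero => ?_⟩
  ext w
  by_contra hw
  have hwd := hhom w (Finsupp.mem_support_iff.mpr hw)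
  have hcoeff := congrFun (hsum.symm.trans (hzero _)) ⟨w, hwd.le⟩
  have hhw : h ⟨w, hwd.le⟩ = 0 := apply_eq_zero_of_mem_lowDegree hlow (by simp [hwd])
  simp only [hhw, add_zero] at hcoeff
  exact hw hcoeff
end

section
/- Let v₁,…,v_κ ∈ ℝⁿ, let w₁,…,w_s be words in noncommuting variables, and let (A,X) be a tuple of n×n real symmetric matrices such that the κs vectors {w_i(A,X)v_k : 1 ≤ i ≤ s, 1 ≤ k ≤ κ} are linearly independent in ℝⁿ. Then the codimension in ℝ^{sκn} of the span of { ((I_κ ⊗ H·w₁(A,X))v, …, (I_κ ⊗ H·w_s(A,X))v) : H ∈ S_n } equals sκ(sκ−1)/2, where v = col(v₁,…,v_κ). -/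
/-!
Put the `N = sκ` vectors `u_p = w_i(A,X) v_k` as the rows of a matrix `U`; for symmetric `H` the
stacked vector is the matrix `Z = U H` with rows `H u_p`, and it satisfies the compatibility
condition that `U Zᵀ = (u_p ⬝ z_q)` is symmetric. Conversely, the rows of `U` being independent,
`U E = 1` for some `E`, and if `M = U Zᵀ` is symmetric then `H = Zᵀ Eᵀ + E Z - E M Eᵀ` is
symmetric with `U H = Z`. Hence the span is the kernel of `Z ↦ ((U Zᵀ)_pq - (U Zᵀ)_qp)_{p<q}`,
which is onto (hit `A` with `Z = (E A)ᵀ`), and rank–nullity gives codimension `N(N-1)/2`.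
-/

open Matrix

namespace Matrix

theorem isSymm_iff_forall_lt {ι α : Type*} [LinearOrder ι] {A : Matrix ι ι α} :
    A.IsSymm ↔ ∀ p q, p < q → A p q = A q p := by
  refine ⟨fun hA p q _ => hA.apply q p, fun h => IsSymm.ext fun p q => ?_⟩
  rcases lt_trichotomy p q with hpq | rfl | hpq
  · exact (h p q hpq).symm
  · rfl
  · exact h q p hpq

variable {K ι d : Type*} [Field K] [Fintype d]

theorem exists_mul_eq_one_of_linearIndependent_row [Fintype ι] [DecidableEq ι]
    {U : Matrix ι d K} (hU : LinearIndependent K U.row) : ∃ E : Matrix d ι K, U * E = 1 := by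
  refine mulVec_surjective_iff_exists_right_inverse.1 fun y => ?_
  have hrange : LinearMap.range U.mulVecLin = ⊤ := Submodule.eq_top_of_finrank_eq <| by
    rw [← rank, hU.rank_matrix, Module.finrank_fintype_fun_eq_card]
  exact LinearMap.range_eq_top.1 hrange y

def compatibleSubspace (U : Matrix ι d K) : Submodule K (Matrix ι d K) where
  carrier := {Z | (U * Zᵀ).IsSymm}
  add_mem' {Z Z'} hZ hZ' := by
    simp only [Set.mem_ofPred_eq, transpose_add, Matrix.mul_add] at *
    exact hZ.add hZ'
  zero_mem' := by simp [IsSymm]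
  smul_mem' c Z hZ := by
    simp only [Set.mem_ofPred_eq, transpose_smul, Matrix.mul_smul] at *
    exact hZ.smul c

theorem mem_compatibleSubspace {U Z : Matrix ι d K} :
    Z ∈ compatibleSubspace U ↔ (U * Zᵀ).IsSymm := Iff.rfl

theorem mul_mem_compatibleSubspace (U : Matrix ι d K) {H : Matrix d d K} (hH : H.IsSymm) :
    U * H ∈ compatibleSubspace U := by
  simp [mem_compatibleSubspace, IsSymm, transpose_mul, hH.eq, Matrix.mul_assoc]

theorem exists_isSymm_mul_eq_of_mem_compatibleSubspace [Fintype ι] [DecidableEq ι]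
    {U : Matrix ι d K} {E : Matrix d ι K} (hE : U * E = 1) {Z : Matrix ι d K}
    (hZ : Z ∈ compatibleSubspace U) : ∃ H : Matrix d d K, H.IsSymm ∧ U * H = Z := by
  refine ⟨Zᵀ * Eᵀ + E * Z - E * (U * Zᵀ) * Eᵀ, ?_, ?_⟩
  · have hM : (E * (U * Zᵀ) * Eᵀ)ᵀ = E * (U * Zᵀ) * Eᵀ := by
      rw [transpose_mul, transpose_mul, hZ.eq, transpose_transpose]
      simp only [Matrix.mul_assoc]
    rw [IsSymm, transpose_sub, hM, transpose_add, transpose_mul, transpose_mul, transpose_transpose,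
      transpose_transpose, add_comm (E * Z)]
  · simp only [Matrix.mul_add, Matrix.mul_sub, ← Matrix.mul_assoc, hE, Matrix.one_mul]
    abel

theorem coe_compatibleSubspace [Fintype ι] [DecidableEq ι] {U : Matrix ι d K}
    (hU : LinearIndependent K U.row) :
    (compatibleSubspace U : Set (Matrix ι d K)) = {Z | ∃ H : Matrix d d K, H.IsSymm ∧ Z = U * H} := by
  obtain ⟨E, hE⟩ := exists_mul_eq_one_of_linearIndependent_row hU
  ext Z
  refine ⟨fun hZ => ?_, ?_⟩
  · obtain ⟨H, hH, rfl⟩ := exists_isSymm_mul_eq_of_mem_compatibleSubspace hE hZ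
    exact ⟨H, hH, rfl⟩
  · rintro ⟨H, hH, rfl⟩
    exact mul_mem_compatibleSubspace U hH

def compatibilityDefect [LinearOrder ι] (U : Matrix ι d K) :
    Matrix ι d K →ₗ[K] ({pq : ι × ι // pq.1 < pq.2} → K) where
  toFun Z pq := (U * Zᵀ) pq.1.1 pq.1.2 - (U * Zᵀ) pq.1.2 pq.1.1
  map_add' Z Z' := by
    ext
    simp only [transpose_add, Matrix.mul_add, add_apply, Pi.add_apply]
    ring
  map_smul' c Z := by
    ext
    simp only [transpose_smul, Matrix.mul_smul, smul_apply, Pi.smul_apply, smul_eq_mul,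
      RingHom.id_apply]
    ring

theorem ker_compatibilityDefect [LinearOrder ι] (U : Matrix ι d K) :
    LinearMap.ker (compatibilityDefect U) = compatibleSubspace U := by
  ext Z
  rw [LinearMap.mem_ker, mem_compatibleSubspace, isSymm_iff_forall_lt, funext_iff]
  simp [compatibilityDefect, sub_eq_zero]

theorem compatibilityDefect_surjective [Fintype ι] [LinearOrder ι] {U : Matrix ι d K}
    {E : Matrix d ι K} (hE : U * E = 1) : Function.Surjective (compatibilityDefect U) := by
  intro a
  let A : Matrix ι ι K := of fun p q => if h : p < q then a ⟨(p, q), h⟩ else 0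
  refine ⟨(E * A)ᵀ, funext fun ⟨(p, q), hpq⟩ => ?_⟩
  simp [compatibilityDefect, ← Matrix.mul_assoc, hE, A, hpq, hpq.not_gt]

theorem finrank_compatibleSubspace [Fintype ι] {U : Matrix ι d K}
    (hU : LinearIndependent K U.row) :
    Module.finrank K (compatibleSubspace U) + (Fintype.card ι).choose 2
      = Fintype.card ι * Fintype.card d := by
  classical
  -- any order will do: it only picks one of `(p, q)`, `(q, p)` for each pair
  let _ : LinearOrder ι := LinearOrder.lift' _ (Fintype.equivFin ι).injective
  obtain ⟨E, hE⟩ := exists_mul_eq_one_of_linearIndependent_row hU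
  have hrank := (compatibilityDefect U).finrank_range_add_finrank_ker
  rw [LinearMap.range_eq_top.2 (compatibilityDefect_surjective hE), finrank_top,
    ker_compatibilityDefect, Module.finrank_fintype_fun_eq_card, Fintype.card_subtype,
    Fintype.card_product_filter_lt, Module.finrank_matrix, Module.finrank_self, mul_one] at hrank
  rw [← hrank, add_comm]

theorem finrank_span_isSymm_mulVec [Fintype ι] {u : ι → d → K} (hu : LinearIndependent K u) :
    Module.finrank K (Submodule.span K
      {x : ι → d → K | ∃ H : Matrix d d K, H.IsSymm ∧ x = fun p => H *ᵥ u p})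
      + (Fintype.card ι).choose 2 = Fintype.card ι * Fintype.card d := by
  classical
  have hmul : ∀ H : Matrix d d K, H.IsSymm → of.symm (of u * H) = fun p => H *ᵥ u p := by
    intro H hH
    ext p : 1
    change (of u * H) p = _
    rw [mul_apply_eq_vecMul, ← mulVec_transpose, hH.eq]
    rfl
  have hset : {x : ι → d → K | ∃ H : Matrix d d K, H.IsSymm ∧ x = fun p => H *ᵥ u p}
      = (ofLinearEquiv K).symm '' compatibleSubspace (of u) := by
    rw [coe_compatibleSubspace (U := of u) hu]
    ext x
    constructor
    · rintro ⟨H, hH, rfl⟩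
      exact ⟨of u * H, ⟨H, hH, rfl⟩, hmul H hH⟩
    · rintro ⟨_, ⟨H, hH, rfl⟩, rfl⟩
      exact ⟨H, hH, hmul H hH⟩
  rw [hset, ← LinearEquiv.coe_coe, Submodule.span_image, Submodule.span_eq,
    LinearEquiv.finrank_map_eq]
  exact finrank_compatibleSubspace hu

end Matrix

theorem chsy_matrix_general {n s κ m : ℕ}
    (Y : Fin m → Matrix (Fin n) (Fin n) ℝ)
    (w : Fin s → List (Fin m)) (v : Fin κ → Fin n → ℝ)
    (hli : LinearIndependent ℝ (fun p : Fin s × Fin κ =>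
      ((w p.1).map Y).prod *ᵥ v p.2)) :
    Module.finrank ℝ (Submodule.span ℝ
      {x : Fin s → Fin κ → Fin n → ℝ |
        ∃ H : Matrix (Fin n) (Fin n) ℝ, H.IsSymm ∧
          x = fun i k => (H * ((w i).map Y).prod) *ᵥ v k})
      + s * κ * (s * κ - 1) / 2 = s * κ * n := by
  have hset : {x : Fin s → Fin κ → Fin n → ℝ | ∃ H : Matrix (Fin n) (Fin n) ℝ, H.IsSymm ∧
      x = fun i k => (H * ((w i).map Y).prod) *ᵥ v k}
      = LinearEquiv.curry ℝ (Fin n → ℝ) (Fin s) (Fin κ) ''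
        {x | ∃ H : Matrix (Fin n) (Fin n) ℝ, H.IsSymm ∧
          x = fun p => H *ᵥ (((w p.1).map Y).prod *ᵥ v p.2)} := by
    ext x
    simp [mulVec_mulVec, eq_comm]
    rfl
  rw [hset, ← LinearEquiv.coe_coe, Submodule.span_image, LinearEquiv.finrank_map_eq,
    ← Nat.choose_two_right]
  simpa using finrank_span_isSymm_mulVec hli

/-- **Matrix-valued CHSY lemma.** If the `s κ` vectors `w_i(A,X) v_k` are linearly
independent in `ℝⁿ`, then the span of the stacked vectors
`((I_κ ⊗ H w₁(A,X)) v, …, (I_κ ⊗ H w_s(A,X)) v)`, as `H` ranges over the symmetric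
`n × n` matrices, has codimension `s κ (s κ − 1)/2` in `ℝ^{s κ n}`.  Here the word
`w_i` is evaluated at the tuple `Y = (A, X)` as `((w_i).map Y).prod`, and
`((I_κ ⊗ M) v)` has `(k, ·)` block `M *ᵥ v k`. -/
theorem chsy_matrix {n s κ m : ℕ}
    (Y : Fin m → Matrix (Fin n) (Fin n) ℝ) (hY : ∀ i, (Y i).IsSymm)
    (w : Fin s → List (Fin m)) (v : Fin κ → Fin n → ℝ)
    (hli : LinearIndependent ℝ (fun p : Fin s × Fin κ =>
      ((w p.1).map Y).prod *ᵥ v p.2)) :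
    Module.finrank ℝ (Submodule.span ℝ
      {x : Fin s → Fin κ → Fin n → ℝ |
        ∃ H : Matrix (Fin n) (Fin n) ℝ, H.IsSymm ∧
          x = fun i k => (H * ((w i).map Y).prod) *ᵥ v k})
      + s * κ * (s * κ - 1) / 2 = s * κ * n :=
  chsy_matrix_general Y w v hli
end

section
/- Let r be a real polynomial in one variable with r(0) = 1, and suppose x, y are real numbers with r(x) > 0, r(y) > 0 and r(x) ≠ r(y). Let a, c > 0, b = 2√(a c r(x) r(y))/(r(x)+r(y)), t = −√(a r(x)/(c r(y))), B = [[a, b],[b, c]], X = diag(x, y), v = (1, t)ᵀ. Then r(X)B + B·r(X) ⪰ 0 and (r(X)B + B·r(X))v = 0. -/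
/-!
Since `r(X) = diag(p, q)` with `p = r(x)`, `q = r(y)`, the matrix `r(X) B + B r(X)` has entries
`2ap, (p + q) b, 2cq`, and the choice of `b` makes `(p + q) b = 2 √(ap) √(cq)`. So it equals
`2 w wᵀ` with `w = (√(ap), √(cq))`: positive semidefinite of rank one, and `v = (1, t)` is
orthogonal to `w` by the choice of `t`.
-/

open Matrix Polynomial

theorem Polynomial.aeval_diagonal {R n : Type*} [CommSemiring R] [Fintype n] [DecidableEq n]
    (d : n → R) (p : R[X]) : aeval (diagonal d) p = diagonal fun i => p.eval (d i) := by
  rw [← diagonalAlgHom_apply R, aeval_algHom_apply, aeval_pi_apply, diagonalAlgHom_apply]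
  simp only [coe_aeval_eq_eval]

theorem Matrix.diagonal_mul_add_mul_diagonal {α n : Type*} [NonUnitalNonAssocSemiring α]
    [Fintype n] [DecidableEq n] (d : n → α) (B : Matrix n n α) :
    diagonal d * B + B * diagonal d = of fun i j => d i * B i j + B i j * d j := by
  ext i j
  simp [diagonal_mul, mul_diagonal]

theorem diagonal_mul_add_mul_diagonal_eq_smul_vecMulVec {p q a b c : ℝ}
    (hap : 0 ≤ a * p) (hcq : 0 ≤ c * q) (hb : (p + q) * b = 2 * (√(a * p) * √(c * q))) :
    diagonal ![p, q] * !![a, b; b, c] + !![a, b; b, c] * diagonal ![p, q]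
      = (2 : ℝ) • vecMulVec ![√(a * p), √(c * q)] ![√(a * p), √(c * q)] := by
  rw [diagonal_mul_add_mul_diagonal]
  ext i j
  fin_cases i <;> fin_cases j <;> simp
  · nlinarith [Real.mul_self_sqrt hap]
  · linarith
  · linarith
  · nlinarith [Real.mul_self_sqrt hcq]

theorem Matrix.posSemidef_vecMulVec_self {R n : Type*} [CommRing R] [PartialOrder R] [StarRing R]
    [TrivialStar R] [StarOrderedRing R] [Finite n] (a : n → R) : (vecMulVec a a).PosSemidef := by
  simpa using posSemidef_vecMulVec_self_star a

theorem boundary_witness_general (r : Polynomial ℝ) (x y a c : ℝ)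
    (hx : 0 < r.eval x) (hy : 0 < r.eval y)
    (ha : 0 < a) (hc : 0 < c) (b t : ℝ)
    (hb : b = 2 * Real.sqrt (a * c * r.eval x * r.eval y) / (r.eval x + r.eval y))
    (ht : t = - Real.sqrt (a * r.eval x / (c * r.eval y)))
    (X : Matrix (Fin 2) (Fin 2) ℝ) (hX : X = Matrix.diagonal ![x, y])
    (B : Matrix (Fin 2) (Fin 2) ℝ) (hB : B = !![a, b; b, c])
    (RX : Matrix (Fin 2) (Fin 2) ℝ) (hRX : RX = Polynomial.aeval X r) :
    (RX * B + B * RX).PosSemidef ∧ (RX * B + B * RX) *ᵥ ![1, t] = 0 := by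
  set p := r.eval x
  set q := r.eval y
  have hap : 0 < a * p := mul_pos ha hx
  have hcq : 0 < c * q := mul_pos hc hy
  have hRX' : RX = diagonal ![p, q] := by
    rw [hRX, hX, aeval_diagonal]
    congr 1
    ext i
    fin_cases i <;> rfl
  have hb' : (p + q) * b = 2 * (√(a * p) * √(c * q)) := by
    rw [hb, ← Real.sqrt_mul hap.le, show a * p * (c * q) = a * c * p * q by ring]
    field_simp
  have hw : ![√(a * p), √(c * q)] ⬝ᵥ ![1, t] = 0 := by
    rw [ht, Real.sqrt_div hap.le]
    simp [dotProduct, Fin.sum_univ_two, mul_div_cancel₀ _ (Real.sqrt_pos.2 hcq).ne']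
  rw [hRX', hB, diagonal_mul_add_mul_diagonal_eq_smul_vecMulVec hap.le hcq.le hb']
  refine ⟨(posSemidef_vecMulVec_self _).smul zero_le_two, ?_⟩
  rw [smul_mulVec, vecMulVec_mulVec, hw]
  simp

/-- With `r` a real polynomial, `r(0) = 1`, `r(x), r(y) > 0`, `r(x) ≠ r(y)`, `a, c > 0`,
`b = 2√(a c r(x) r(y))/(r(x)+r(y))`, `t = −√(a r(x)/(c r(y)))`, `B = [[a,b],[b,c]]`,
`X = diag(x,y)` and `v = (1, t)ᵀ`: the matrix `r(X) B + B r(X)` is positive semidefinite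
and kills `v`. -/
theorem boundary_witness (r : Polynomial ℝ) (hr0 : r.eval 0 = 1) (x y a c : ℝ)
    (hx : 0 < r.eval x) (hy : 0 < r.eval y) (hxy : r.eval x ≠ r.eval y)
    (ha : 0 < a) (hc : 0 < c) (b t : ℝ)
    (hb : b = 2 * Real.sqrt (a * c * r.eval x * r.eval y) / (r.eval x + r.eval y))
    (ht : t = - Real.sqrt (a * r.eval x / (c * r.eval y)))
    (X : Matrix (Fin 2) (Fin 2) ℝ) (hX : X = Matrix.diagonal ![x, y])
    (B : Matrix (Fin 2) (Fin 2) ℝ) (hB : B = !![a, b; b, c])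
    (RX : Matrix (Fin 2) (Fin 2) ℝ) (hRX : RX = Polynomial.aeval X r) :
    (RX * B + B * RX).PosSemidef ∧ (RX * B + B * RX) *ᵥ ![1, t] = 0 :=
  boundary_witness_general r x y a c hx hy ha hc b t hb ht X hX B hB RX hRX
end
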